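/- arXiv:1612.04571 — 6 statements merged into one kernel-verified Lean document; each statement's English description precedes it below -/
import Mathlib

section
/- For every finite undirected simple graph G = (V, E) there exist a subset T ⊆ V and a map φ : V → T such that: (i) φ(u) = u for every u ∈ T, and for every v ∈ V \ T the vertices v and φ(v) are adjacent in G; (ii) no two vertices of T are adjacent in G (T is an independent set); and (iii) writing n_u = |{v ∈ V : φ(v) = u}| for u ∈ T, one has Σ_{u ∈ T} C(n_u, 2) ≤ |E|, where C(m,2) = m(m−1)/2. -/
/-!
Greedy star decomposition. Let `u` have minimum degree `d` in the subgraph induced on `S` and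
collapse its closed neighbourhood `N[u]`, of size `d + 1`, onto `u`; then recurse on `S \ N[u]`.
Later centres lie outside `N[u]`, so the centres are independent. Every vertex of `N[u]` has
degree at least `d` in `S`, so at least `(d + 1) d = 2 C(d + 1, 2)` ordered adjacent pairs of `S`
start in `N[u]`, and none of them survives in `S \ N[u]`. Summing, `2 Σ C(n_u, 2)` is at most the
degree sum of `G`, which is `2 |E|`.
-/

open Finset

namespace SimpleGraph

variable {V : Type*} (G : SimpleGraph V) [DecidableRel G.Adj]

def degreeOn (S : Finset V) (v : V) : ℕ := #{w ∈ S | G.Adj v w}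

lemma degreeOn_mono {S S' : Finset V} (h : S ⊆ S') (v : V) : G.degreeOn S v ≤ G.degreeOn S' v :=
  card_le_card (filter_subset_filter _ h)

lemma sum_degreeOn_univ [Fintype V] [DecidableEq V] :
    ∑ v, G.degreeOn univ v = 2 * #G.edgeFinset := by
  simp only [degreeOn, ← neighborFinset_eq_filter, card_neighborFinset_eq_degree,
    sum_degrees_eq_twice_card_edges]

variable [DecidableEq V]

def closedNbhdOn (S : Finset V) (u : V) : Finset V := insert u {w ∈ S | G.Adj u w}

lemma mem_closedNbhdOn_self (S : Finset V) (u : V) : u ∈ G.closedNbhdOn S u := mem_insert_self _ _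

lemma closedNbhdOn_subset {S : Finset V} {u : V} (hu : u ∈ S) : G.closedNbhdOn S u ⊆ S :=
  insert_subset hu (filter_subset _ _)

lemma card_closedNbhdOn (S : Finset V) (u : V) : #(G.closedNbhdOn S u) = G.degreeOn S u + 1 :=
  card_insert_of_notMem fun h => G.loopless.irrefl u (mem_filter.1 h).2

variable {G}

lemma not_adj_of_mem_sdiff_closedNbhdOn {S : Finset V} {u w : V}
    (hw : w ∈ S \ G.closedNbhdOn S u) : ¬G.Adj u w := fun h =>
  (mem_sdiff.1 hw).2 (mem_insert_of_mem (mem_filter.2 ⟨(mem_sdiff.1 hw).1, h⟩))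

lemma sum_degreeOn_sdiff_closedNbhdOn_add_le {S : Finset V} {u : V} (hu : u ∈ S)
    (hmin : ∀ v ∈ S, G.degreeOn S u ≤ G.degreeOn S v) :
    ∑ v ∈ S \ G.closedNbhdOn S u, G.degreeOn (S \ G.closedNbhdOn S u) v +
      (G.degreeOn S u + 1) * G.degreeOn S u ≤ ∑ v ∈ S, G.degreeOn S v := by
  rw [← sum_sdiff (G.closedNbhdOn_subset hu)]
  gcongr with v
  · exact G.degreeOn_mono sdiff_subset v
  · rw [← G.card_closedNbhdOn, ← smul_eq_mul]
    exact card_nsmul_le_sum _ _ _ fun v hv => hmin v (G.closedNbhdOn_subset hu hv)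

variable (G) in
structure IsStarRetraction (S T : Finset V) (φ : V → V) : Prop where
  subset : T ⊆ S
  mapsTo : ∀ v ∈ S, φ v ∈ T
  map_of_mem : ∀ u ∈ T, φ u = u
  adj_of_notMem : ∀ v ∈ S, v ∉ T → G.Adj v (φ v)
  isIndepSet : G.IsIndepSet T

variable (G) in
def extendByStar (S : Finset V) (u : V) (φ : V → V) (v : V) : V :=
  if v ∈ S \ G.closedNbhdOn S u then φ v else u

section extendByStar

variable {S : Finset V} {u v : V} {φ : V → V}

lemma extendByStar_of_mem (hv : v ∈ S \ G.closedNbhdOn S u) : G.extendByStar S u φ v = φ v :=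
  if_pos hv

lemma extendByStar_of_notMem (hv : v ∉ S \ G.closedNbhdOn S u) : G.extendByStar S u φ v = u :=
  if_neg hv

end extendByStar

namespace IsStarRetraction

variable {S T : Finset V} {φ : V → V} {u : V}

lemma notMem (h : G.IsStarRetraction (S \ G.closedNbhdOn S u) T φ) : u ∉ T := fun hu =>
  (mem_sdiff.1 (h.subset hu)).2 (G.mem_closedNbhdOn_self S u)

lemma extendByStar (hu : u ∈ S) (h : G.IsStarRetraction (S \ G.closedNbhdOn S u) T φ) :
    G.IsStarRetraction S (insert u T) (G.extendByStar S u φ) where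
  subset := insert_subset hu (h.subset.trans sdiff_subset)
  mapsTo v _ := by
    by_cases hv : v ∈ S \ G.closedNbhdOn S u
    · rw [extendByStar_of_mem hv]
      exact mem_insert_of_mem (h.mapsTo v hv)
    · rw [extendByStar_of_notMem hv]
      exact mem_insert_self u T
  map_of_mem t ht := by
    obtain rfl | ht := mem_insert.1 ht
    · exact extendByStar_of_notMem fun ht => (mem_sdiff.1 ht).2 (G.mem_closedNbhdOn_self S t)
    · rw [extendByStar_of_mem (h.subset ht), h.map_of_mem t ht]
  adj_of_notMem v hvS hvT := by
    by_cases hv : v ∈ S \ G.closedNbhdOn S u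
    · rw [extendByStar_of_mem hv]
      exact h.adj_of_notMem v hv fun hvT' => hvT (mem_insert_of_mem hvT')
    · rw [extendByStar_of_notMem hv]
      obtain rfl | hvN := mem_insert.1 (not_not.1 fun hvC => hv (mem_sdiff.2 ⟨hvS, hvC⟩))
      · exact absurd (mem_insert_self v T) hvT
      · exact (mem_filter.1 hvN).2.symm
  isIndepSet := by
    rw [coe_insert, IsIndepSet, Set.pairwise_insert]
    refine ⟨h.isIndepSet, fun t ht _ => ?_⟩
    have hadj := not_adj_of_mem_sdiff_closedNbhdOn (h.subset ht)
    exact ⟨hadj, fun h' => hadj h'.symm⟩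

lemma filter_extendByStar_eq_self (hu : u ∈ S)
    (h : G.IsStarRetraction (S \ G.closedNbhdOn S u) T φ) :
    {v ∈ S | G.extendByStar S u φ v = u} = G.closedNbhdOn S u := by
  ext v
  rw [Finset.mem_filter]
  by_cases hv : v ∈ S \ G.closedNbhdOn S u
  · rw [extendByStar_of_mem hv]
    have hφv : φ v ≠ u := fun h' => h.notMem (h' ▸ h.mapsTo v hv)
    simp only [hφv, and_false, false_iff]
    exact (mem_sdiff.1 hv).2
  · rw [extendByStar_of_notMem hv, eq_self, and_true]
    exact ⟨fun hvS => not_not.1 fun hvC => hv (mem_sdiff.2 ⟨hvS, hvC⟩),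
      fun hvC => G.closedNbhdOn_subset hu hvC⟩

lemma filter_extendByStar_eq_of_mem (h : G.IsStarRetraction (S \ G.closedNbhdOn S u) T φ)
    {t : V} (ht : t ∈ T) :
    {v ∈ S | G.extendByStar S u φ v = t} = {v ∈ S \ G.closedNbhdOn S u | φ v = t} := by
  ext v
  simp only [Finset.mem_filter]
  by_cases hv : v ∈ S \ G.closedNbhdOn S u
  · rw [extendByStar_of_mem hv]
    exact ⟨fun h' => ⟨hv, h'.2⟩, fun h' => ⟨(mem_sdiff.1 hv).1, h'.2⟩⟩
  · rw [extendByStar_of_notMem hv]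
    have hut : u ≠ t := fun hut => h.notMem (hut ▸ ht)
    simp only [hut, hv, and_false, false_and]

lemma sum_choose_card_filter_extendByStar (hu : u ∈ S)
    (h : G.IsStarRetraction (S \ G.closedNbhdOn S u) T φ) :
    ∑ t ∈ insert u T, (#{v ∈ S | G.extendByStar S u φ v = t}).choose 2 =
      (G.degreeOn S u + 1).choose 2 +
        ∑ t ∈ T, (#{v ∈ S \ G.closedNbhdOn S u | φ v = t}).choose 2 := by
  rw [sum_insert h.notMem, h.filter_extendByStar_eq_self hu, G.card_closedNbhdOn]
  exact congrArg _ (sum_congr rfl fun t ht => by rw [h.filter_extendByStar_eq_of_mem ht])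

end IsStarRetraction

variable (G) in
theorem exists_isStarRetraction (S : Finset V) :
    ∃ T φ, G.IsStarRetraction S T φ ∧
      2 * ∑ t ∈ T, (#{v ∈ S | φ v = t}).choose 2 ≤ ∑ v ∈ S, G.degreeOn S v := by
  induction S using Finset.strongInduction with
  | H S ih =>
  obtain rfl | hS := S.eq_empty_or_nonempty
  · exact ⟨∅, id, ⟨empty_subset _, by simp, by simp, by simp, by simp⟩, by simp⟩
  obtain ⟨u, hu, hmin⟩ := S.exists_min_image (G.degreeOn S) hS
  obtain ⟨T, φ, hφ, hsum⟩ :=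
    ih _ (sdiff_ssubset (G.closedNbhdOn_subset hu) ⟨u, G.mem_closedNbhdOn_self S u⟩)
  refine ⟨insert u T, G.extendByStar S u φ, hφ.extendByStar hu, ?_⟩
  have hstar : (G.degreeOn S u + 1).choose 2 * 2 = (G.degreeOn S u + 1) * G.degreeOn S u := by
    rw [← Nat.add_one_mul_choose_eq, Nat.choose_one_right]
  have hdeg := sum_degreeOn_sdiff_closedNbhdOn_add_le hu hmin
  rw [hφ.sum_choose_card_filter_extendByStar hu]
  omega

end SimpleGraph

/-- For every finite undirected simple graph `G` there exist an independent set `T`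
and a map `φ : V → T` fixing `T` pointwise, sending every vertex outside `T` to a
neighbor, such that `Σ_{u ∈ T} C(n_u, 2) ≤ |E|` where `n_u = |φ⁻¹(u)|`. -/
theorem graph_shrink {V : Type*} [Fintype V] [DecidableEq V]
    (G : SimpleGraph V) [DecidableRel G.Adj] :
    ∃ (T : Finset V) (φ : V → V),
      (∀ v : V, φ v ∈ T) ∧
      (∀ u ∈ T, φ u = u) ∧
      (∀ v : V, v ∉ T → G.Adj v (φ v)) ∧
      (∀ u ∈ T, ∀ v ∈ T, ¬ G.Adj u v) ∧
      ∑ u ∈ T, ((Finset.univ.filter fun v : V => φ v = u).card).choose 2 ≤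
        G.edgeFinset.card := by
  obtain ⟨T, φ, hφ, hsum⟩ := G.exists_isStarRetraction univ
  rw [G.sum_degreeOn_univ] at hsum
  exact ⟨T, φ, fun v => hφ.mapsTo v (mem_univ v), hφ.map_of_mem,
    fun v => hφ.adj_of_notMem v (mem_univ v),
    fun a ha b hb hab => hφ.isIndepSet ha hb hab.ne hab, by omega⟩
end

section
/- Let x_1, …, x_n ∈ ℝ^d with n ≥ 1, let β, r > 0, and let N_β = |{(i,j) : 1 ≤ i < j ≤ n, ‖x_i − x_j‖₂ ≤ βr}|. Then for every x_0 ∈ ℝ^d, max_{1≤i≤n} ‖x_i − x_0‖₂ ≥ ((n² / (2N_β + n))^{1/d} − 1) · βr / 2. -/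
/-!
Join two of the points when they are `βr`-near. This graph has `n` vertices and `N_β` edges, so
by the Caro–Wei bound and Cauchy–Schwarz it has an independent set `S` of size at least
`n² / (2N_β + n)`. The balls of radius `βr/2` around the points of `S` are pairwise disjoint and
lie in the ball of radius `R + βr/2` around `x₀`, where `R` is the largest distance to `x₀`;
comparing volumes gives `|S| (βr/2)^d ≤ (R + βr/2)^d`, and taking `d`-th roots gives the claim.
-/

open Finset Metric MeasureTheory Module

namespace SimpleGraph

variable {V : Type*} (G : SimpleGraph V) [DecidableRel G.Adj]

theorem sum_one_div_card_filter_adj_succ_le_one [DecidableEq V] {A : Finset V} {v : V}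
    (hv : ∀ u ∈ A, #{w ∈ A | G.Adj v w} ≤ #{w ∈ A | G.Adj u w}) (hvA : v ∈ A) :
    ∑ u ∈ insert v {w ∈ A | G.Adj v w}, (1 : ℝ) / (#{w ∈ A | G.Adj u w} + 1) ≤ 1 := by
  have hN : insert v {w ∈ A | G.Adj v w} ⊆ A := insert_subset hvA (filter_subset _ _)
  calc ∑ u ∈ insert v {w ∈ A | G.Adj v w}, (1 : ℝ) / (#{w ∈ A | G.Adj u w} + 1)
      ≤ ∑ _u ∈ insert v {w ∈ A | G.Adj v w}, (1 : ℝ) / (#{w ∈ A | G.Adj v w} + 1) :=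
        sum_le_sum fun u hu => one_div_le_one_div_of_le (by positivity)
          (by exact_mod_cast Nat.add_le_add_right (hv u (hN hu)) 1)
    _ ≤ 1 := by
        rw [sum_const, nsmul_eq_mul, mul_one_div, div_le_one (by positivity)]
        exact_mod_cast card_insert_le _ _

/-- The Caro–Wei bound for the subgraph induced on `A`. -/
theorem exists_isIndepSet_subset_sum_le_card [DecidableEq V] (A : Finset V) :
    ∃ S ⊆ A, G.IsIndepSet (S : Set V) ∧
      ∑ v ∈ A, (1 : ℝ) / (#{w ∈ A | G.Adj v w} + 1) ≤ #S := by
  induction A using Finset.strongInduction with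
  | _ A ih =>
  rcases A.eq_empty_or_nonempty with rfl | hA
  · exact ⟨∅, by simp⟩
  -- Greedy step: take a vertex of minimal degree and discard its closed neighbourhood.
  obtain ⟨v, hvA, hv⟩ := A.exists_min_image (fun v => #{w ∈ A | G.Adj v w}) hA
  set N := insert v {w ∈ A | G.Adj v w}
  have hNA : N ⊆ A := insert_subset hvA (filter_subset _ _)
  obtain ⟨S, hSA, hS, hsum⟩ := ih (A \ N) (sdiff_ssubset hNA ⟨v, mem_insert_self _ _⟩)
  have hvS : ∀ b ∈ S, v ≠ b ∧ ¬G.Adj v b := fun b hb => by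
    have hb' := mem_sdiff.mp (hSA hb)
    exact ⟨fun h => hb'.2 (h ▸ mem_insert_self _ _),
      fun h => hb'.2 (mem_insert_of_mem (mem_filter.mpr ⟨hb'.1, h⟩))⟩
  refine ⟨insert v S, insert_subset hvA (hSA.trans sdiff_subset), ?_, ?_⟩
  · rw [coe_insert]
    exact hS.insert fun b hb _ => ⟨(hvS b hb).2, fun h => (hvS b hb).2 h.symm⟩
  · have hdeg : ∑ u ∈ A \ N, (1 : ℝ) / (#{w ∈ A | G.Adj u w} + 1)
        ≤ ∑ u ∈ A \ N, (1 : ℝ) / (#{w ∈ A \ N | G.Adj u w} + 1) :=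
      sum_le_sum fun u _ => one_div_le_one_div_of_le (by positivity) (by
        exact_mod_cast Nat.add_le_add_right (card_le_card (filter_subset_filter _ sdiff_subset)) 1)
    rw [← sum_sdiff hNA, card_insert_of_notMem fun h => (hvS v h).1 rfl, Nat.cast_succ]
    linarith [G.sum_one_div_card_filter_adj_succ_le_one hv hvA]

variable [Fintype V]

theorem exists_isIndepSet_sum_le_card :
    ∃ S : Finset V, G.IsIndepSet (S : Set V) ∧ ∑ v, (1 : ℝ) / (G.degree v + 1) ≤ #S := by
  classical
  obtain ⟨S, -, hS, hsum⟩ := G.exists_isIndepSet_subset_sum_le_card univ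
  exact ⟨S, hS, by simpa [← card_neighborFinset_eq_degree, neighborFinset_eq_filter] using hsum⟩

/-- Turán's bound `α(G) ≥ n² / (2m + n)`. -/
theorem exists_isIndepSet_sq_div_le_card :
    ∃ S : Finset V, G.IsIndepSet (S : Set V) ∧
      (Fintype.card V : ℝ) ^ 2 / (2 * #G.edgeFinset + Fintype.card V) ≤ #S := by
  obtain ⟨S, hS, hsum⟩ := G.exists_isIndepSet_sum_le_card
  have hdeg : ∑ v, ((G.degree v : ℝ) + 1) = 2 * #G.edgeFinset + Fintype.card V := by
    rw [sum_add_distrib, sum_const, card_univ, nsmul_one]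
    exact_mod_cast congrArg (· + Fintype.card V) G.sum_degrees_eq_twice_card_edges
  refine ⟨S, hS, ?_⟩
  calc (Fintype.card V : ℝ) ^ 2 / (2 * #G.edgeFinset + Fintype.card V)
      = (∑ _v : V, (1 : ℝ)) ^ 2 / ∑ v, ((G.degree v : ℝ) + 1) := by simp [hdeg]
    _ ≤ ∑ v, (1 : ℝ) ^ 2 / (G.degree v + 1) :=
        sq_sum_div_le_sum_sq_div _ _ fun v _ => by positivity
    _ ≤ #S := by simpa using hsum

theorem card_edgeFinset_eq_card_filter_lt [LinearOrder V] :
    #G.edgeFinset = #{p : V × V | p.1 < p.2 ∧ G.Adj p.1 p.2} := by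
  symm
  refine card_bij (fun p _ => s(p.1, p.2)) (fun p hp => by simpa using (mem_filter.mp hp).2.2)
    ?_ ?_
  · rintro ⟨a, b⟩ hab ⟨c, d⟩ hcd h
    simp only [mem_filter, mem_univ, true_and] at hab hcd
    rcases Sym2.eq_iff.mp h with ⟨rfl, rfl⟩ | ⟨rfl, rfl⟩
    · rfl
    · exact absurd hab.1 hcd.1.not_gt
  · intro e he
    induction e using Sym2.ind with
    | _ a b =>
    have hab : G.Adj a b := by simpa using he
    rcases hab.ne.lt_or_gt with h | h
    · exact ⟨(a, b), by simp [h, hab], rfl⟩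
    · exact ⟨(b, a), by simp [h, hab.symm], Sym2.eq_swap⟩

end SimpleGraph

theorem Finset.card_mul_pow_le_of_pairwiseDisjoint_ball {E ι : Type*} [NormedAddCommGroup E]
    [NormedSpace ℝ E] [FiniteDimensional ℝ E] [MeasurableSpace E] [BorelSpace E]
    {S : Finset ι} {y : ι → E} {c : E} {s R : ℝ} (hs : 0 < s) (hR : 0 < R)
    (hdisj : (S : Set ι).PairwiseDisjoint fun a => ball (y a) s)
    (hsub : ∀ a ∈ S, ball (y a) s ⊆ ball c R) :
    #S * s ^ finrank ℝ E ≤ R ^ finrank ℝ E := by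
  set μ : Measure E := Measure.addHaar
  have hV₀ : μ (ball 0 1) ≠ 0 := (measure_ball_pos μ 0 one_pos).ne'
  have hV : μ (ball 0 1) ≠ ⊤ := measure_ball_lt_top.ne
  have hvol : μ (⋃ a ∈ S, ball (y a) s) ≤ μ (ball c R) := measure_mono (Set.iUnion₂_subset hsub)
  rw [measure_biUnion_finset hdisj fun _ _ => measurableSet_ball,
    Measure.addHaar_ball_of_pos μ c hR] at hvol
  simp only [Measure.addHaar_ball_of_pos μ _ hs, sum_const, nsmul_eq_mul, ← mul_assoc] at hvol
  rw [ENNReal.mul_le_mul_iff_left hV₀ hV, ← ENNReal.ofReal_natCast,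
    ← ENNReal.ofReal_mul (by positivity), ENNReal.ofReal_le_ofReal_iff (by positivity)] at hvol
  exact hvol

def nearGraph {ι X : Type*} [PseudoMetricSpace X] (y : ι → X) (δ : ℝ) : SimpleGraph ι where
  Adj i j := i ≠ j ∧ dist (y i) (y j) ≤ δ
  symm := ⟨fun _ _ h => ⟨h.1.symm, dist_comm (y _) (y _) ▸ h.2⟩⟩
  loopless := ⟨fun _ h => h.1 rfl⟩

@[simp]
theorem nearGraph_adj {ι X : Type*} [PseudoMetricSpace X] {y : ι → X} {δ : ℝ} {i j : ι} :
    (nearGraph y δ).Adj i j ↔ i ≠ j ∧ dist (y i) (y j) ≤ δ :=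
  Iff.rfl

theorem card_mul_pow_le_of_isIndepSet_nearGraph {E ι : Type*} [NormedAddCommGroup E]
    [NormedSpace ℝ E] [FiniteDimensional ℝ E] {y : ι → E} {δ : ℝ} {S : Finset ι}
    (hS : (nearGraph y δ).IsIndepSet (S : Set ι)) (hδ : 0 < δ) {c : E} {R : ℝ} (hR : 0 ≤ R)
    (hyc : ∀ a ∈ S, dist (y a) c ≤ R) :
    #S * (δ / 2) ^ finrank ℝ E ≤ (R + δ / 2) ^ finrank ℝ E := by
  borelize E
  refine card_mul_pow_le_of_pairwiseDisjoint_ball (y := y) (c := c) (by positivity)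
    (by positivity) ?_ ?_
  · intro a ha b hb hab
    have : δ < dist (y a) (y b) := not_le.mp fun h => hS ha hb hab (nearGraph_adj.mpr ⟨hab, h⟩)
    exact ball_disjoint_ball (by linarith)
  · intro a ha z hz
    rw [mem_ball] at hz ⊢
    linarith [dist_triangle z (y a) c, hyc a ha]

theorem Real.rpow_inv_natCast_mul_le_of_mul_pow_le {a s b : ℝ} {d : ℕ} (hd : d ≠ 0)
    (ha : 0 ≤ a) (hs : 0 < s) (hb : 0 ≤ b) (h : a * s ^ d ≤ b ^ d) :
    a ^ (d⁻¹ : ℝ) * s ≤ b := by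
  rw [← le_div_iff₀ hs, Real.rpow_inv_le_iff_of_pos ha (by positivity) (by positivity),
    Real.rpow_natCast, div_pow, le_div_iff₀ (by positivity)]
  exact h

/-- Theorem 2 (generalized sphere packing): if `N_β` is the number of `βr`-near
pairs among `x_1, …, x_n ∈ ℝ^d`, then for every `x₀`,
`max_i ‖x_i − x₀‖₂ ≥ ((n²/(2N_β + n))^{1/d} − 1)·βr/2`. -/
theorem max_dist_lower_bound {d n : ℕ} (hn : 0 < n)
    (x : Fin n → EuclideanSpace ℝ (Fin d)) (β r : ℝ) (hβ : 0 < β) (hr : 0 < r)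
    (Nβ : ℕ)
    (hNβ : Nβ = (Finset.univ.filter fun ij : Fin n × Fin n =>
        ij.1 < ij.2 ∧ dist (x ij.1) (x ij.2) ≤ β * r).card)
    (x₀ : EuclideanSpace ℝ (Fin d)) :
    (((n : ℝ) ^ 2 / (2 * (Nβ : ℝ) + (n : ℝ))) ^ ((1 : ℝ) / (d : ℝ)) - 1) * (β * r) / 2 ≤
      Finset.univ.sup' (Finset.univ_nonempty_iff.mpr ⟨⟨0, hn⟩⟩)
        (fun i => dist (x i) x₀) := by
  classical
  set R := univ.sup' (univ_nonempty_iff.mpr ⟨⟨0, hn⟩⟩) fun i => dist (x i) x₀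
  have hR : ∀ i, dist (x i) x₀ ≤ R := fun i => le_sup' (fun j => dist (x j) x₀) (mem_univ i)
  have hR₀ : 0 ≤ R := dist_nonneg.trans (hR ⟨0, hn⟩)
  rcases Nat.eq_zero_or_pos d with rfl | hd
  · simpa using hR₀
  set G := nearGraph x (β * r)
  have hedges : #G.edgeFinset = Nβ := by
    rw [hNβ, G.card_edgeFinset_eq_card_filter_lt]
    congr 1
    exact filter_congr fun p _ => by simpa [G] using fun h _ => h.ne
  obtain ⟨S, hS, hcard⟩ := G.exists_isIndepSet_sq_div_le_card
  rw [hedges, Fintype.card_fin] at hcard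
  have hpack := card_mul_pow_le_of_isIndepSet_nearGraph hS (by positivity) hR₀ fun a _ => hR a
  rw [finrank_euclideanSpace_fin] at hpack
  have := Real.rpow_inv_natCast_mul_le_of_mul_pow_le hd.ne' (by positivity) (by positivity)
    (by positivity) ((mul_le_mul_of_nonneg_right hcard (by positivity)).trans hpack)
  rw [one_div]
  linarith
end

section
/- Let x_1, …, x_n ∈ ℝ^d, let β, r > 0, and let N_β = |{(i,j) : 1 ≤ i < j ≤ n, ‖x_i − x_j‖₂ ≤ βr}|. Then for every x_0 ∈ ℝ^d and every D ≥ 0, the number of indices i with ‖x_i − x_0‖₂ ≤ D satisfies |{i : ‖x_i − x_0‖₂ ≤ D}| ≤ (1 + 2D/(βr))^{d/2} · √(n + 2N_β). -/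
/-!
Put a closed ball of radius `ρ = βr/2` around each of the `m` points within distance `D` of
`x₀`, and let `f` count how many of these balls cover a point. Then `∫ f = m V`, where `V` is
the volume of one ball; `∫ f² = ∑ vol(Bᵢ ∩ Bⱼ) ≤ P V`, since balls of `βr`-far points are
disjoint, where `P ≤ n + 2N_β` counts the ordered near pairs; and `f` vanishes outside the ball
of radius `D + ρ` around `x₀`, of volume `(1 + D/ρ)^d V`. Cauchy–Schwarz gives
`(m V)² ≤ P V · (1 + D/ρ)^d V`, i.e. `m² ≤ (1 + 2D/(βr))^d P`.
-/

open MeasureTheory Metric Finset Module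
open scoped ENNReal

theorem card_filter_le_card_add_two_mul_card_filter_lt {ι : Type*} [Fintype ι] [LinearOrder ι]
    (R : ι → ι → Prop) [DecidableRel R] (hR : ∀ i j, R i j → R j i) :
    #{p : ι × ι | R p.1 p.2} ≤ Fintype.card ι + 2 * #{p : ι × ι | p.1 < p.2 ∧ R p.1 p.2} := by
  set L : Finset (ι × ι) := {p | p.1 < p.2 ∧ R p.1 p.2}
  have hsub : ({p : ι × ι | R p.1 p.2} : Finset _) ⊆ univ.diag ∪ L ∪ L.image Prod.swap := by
    rintro ⟨i, j⟩ hij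
    simp only [mem_filter, mem_univ, true_and] at hij
    rcases lt_trichotomy i j with h | rfl | h
    · simp [L, h, hij]
    · simp
    · exact mem_union_right _ (mem_image.2 ⟨(j, i), by simp [L, h, hR _ _ hij], rfl⟩)
  calc _ ≤ #(univ.diag ∪ L) + #(L.image Prod.swap) :=
        (card_le_card hsub).trans (card_union_le _ _)
    _ ≤ #(univ.diag) + #L + #L := add_le_add (card_union_le _ _) card_image_le
    _ = Fintype.card ι + 2 * #L := by rw [diag_card, card_univ]; ring

theorem sq_lintegral_le_lintegral_sq_mul_measure {α : Type*} [MeasurableSpace α]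
    {μ : Measure α} {f : α → ℝ≥0∞} (hf : AEMeasurable f μ) {s : Set α} (hs : MeasurableSet s)
    (hfs : ∀ x ∉ s, f x = 0) :
    (∫⁻ x, f x ∂μ) ^ 2 ≤ (∫⁻ x, f x ^ 2 ∂μ) * μ s := by
  have hf_eq : f * s.indicator 1 = f := by
    ext x
    by_cases hx : x ∈ s <;> simp [hx, hfs]
  have h_ind : ∫⁻ x, s.indicator 1 x ^ (2 : ℝ) ∂μ = μ s := by
    rw [← lintegral_indicator_one hs]
    congr with x
    by_cases hx : x ∈ s <;> simp [hx]
  have h := ENNReal.lintegral_mul_le_Lp_mul_Lq μ Real.HolderConjugate.two_two hf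
    (g := s.indicator 1) (aemeasurable_one.indicator hs)
  simp_rw [hf_eq, h_ind, ENNReal.rpow_two] at h
  calc (∫⁻ x, f x ∂μ) ^ 2 ≤ ((∫⁻ x, f x ^ 2 ∂μ) ^ (1 / 2 : ℝ) * μ s ^ (1 / 2 : ℝ)) ^ 2 := by
        gcongr
    _ = (∫⁻ x, f x ^ 2 ∂μ) * μ s := by
        rw [← ENNReal.mul_rpow_of_nonneg _ _ (by norm_num), ← ENNReal.rpow_natCast,
          ← ENNReal.rpow_mul]
        norm_num

theorem sq_sum_measure_le_sum_measure_inter_mul {α ι : Type*} [MeasurableSpace α]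
    (μ : Measure α) (S : Finset ι) {B : ι → Set α} {A : Set α}
    (hB : ∀ i ∈ S, MeasurableSet (B i)) (hA : MeasurableSet A) (hBA : ∀ i ∈ S, B i ⊆ A) :
    (∑ i ∈ S, μ (B i)) ^ 2 ≤ (∑ p ∈ S ×ˢ S, μ (B p.1 ∩ B p.2)) * μ A := by
  have h_ind {s : Set α} (hs : MeasurableSet s) : AEMeasurable (s.indicator (1 : α → ℝ≥0∞)) μ :=
    aemeasurable_one.indicator hs
  have hBB {p : ι × ι} (hp : p ∈ S ×ˢ S) : MeasurableSet (B p.1 ∩ B p.2) :=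
    (hB _ (mem_product.1 hp).1).inter (hB _ (mem_product.1 hp).2)
  set f : α → ℝ≥0∞ := fun z => ∑ i ∈ S, (B i).indicator 1 z
  have hf_sq (z : α) : f z ^ 2 = ∑ p ∈ S ×ˢ S, (B p.1 ∩ B p.2).indicator 1 z := by
    simp only [f, sq, sum_mul_sum, ← sum_product', Set.inter_indicator_one, Pi.mul_apply]
  have hf_supp (z : α) (hz : z ∉ A) : f z = 0 :=
    sum_eq_zero fun i hi => Set.indicator_of_notMem (fun hzi => hz (hBA i hi hzi)) _
  have hf_int : ∫⁻ z, f z ∂μ = ∑ i ∈ S, μ (B i) := by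
    rw [lintegral_finsetSum' _ fun i hi => h_ind (hB i hi)]
    exact sum_congr rfl fun i hi => lintegral_indicator_one (hB i hi)
  have hf_sq_int : ∫⁻ z, f z ^ 2 ∂μ = ∑ p ∈ S ×ˢ S, μ (B p.1 ∩ B p.2) := by
    simp_rw [hf_sq]
    rw [lintegral_finsetSum' _ fun p hp => h_ind (hBB hp)]
    exact sum_congr rfl fun p hp => lintegral_indicator_one (hBB hp)
  rw [← hf_int, ← hf_sq_int]
  exact sq_lintegral_le_lintegral_sq_mul_measure
    (Finset.aemeasurable_fun_sum _ fun i hi => h_ind (hB i hi)) hA hf_supp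

theorem sq_card_le_card_near_pairs_mul_pow {E ι : Type*} [NormedAddCommGroup E]
    [NormedSpace ℝ E] [FiniteDimensional ℝ E] (x : ι → E) (S : Finset ι) (x₀ : E) {D ρ : ℝ}
    (hD : 0 ≤ D) (hρ : 0 < ρ) (hS : ∀ i ∈ S, dist (x i) x₀ ≤ D) :
    (#S : ℝ) ^ 2 ≤
      #{p ∈ S ×ˢ S | dist (x p.1) (x p.2) ≤ 2 * ρ} * (1 + D / ρ) ^ finrank ℝ E := by
  borelize E
  set μ : Measure E := Measure.addHaar
  set V := μ (closedBall 0 ρ)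
  set a := 1 + D / ρ
  set K := #{p ∈ S ×ˢ S | dist (x p.1) (x p.2) ≤ 2 * ρ}
  have hV : V ≠ 0 := (measure_closedBall_pos μ 0 hρ).ne'
  have hV' : V ≠ ⊤ := measure_closedBall_lt_top.ne
  have ha : 0 < a := by positivity
  have h_ball (y : E) : μ (closedBall y ρ) = V := Measure.addHaar_closedBall_center μ y ρ
  have h_big : μ (closedBall x₀ (a * ρ)) = ENNReal.ofReal (a ^ finrank ℝ E) * V :=
    Measure.addHaar_closedBall_mul_of_pos μ x₀ ha ρ
  have h_sub (i : ι) (hi : i ∈ S) : closedBall (x i) ρ ⊆ closedBall x₀ (a * ρ) :=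
    closedBall_subset_closedBall' <| by
      rw [add_mul, one_mul, div_mul_cancel₀ _ hρ.ne']; linarith [hS i hi]
  have h_inter (p : ι × ι) : μ (closedBall (x p.1) ρ ∩ closedBall (x p.2) ρ) ≤
      if dist (x p.1) (x p.2) ≤ 2 * ρ then V else 0 := by
    split_ifs with h
    · exact (measure_mono Set.inter_subset_left).trans (h_ball _).le
    · rw [(closedBall_disjoint_closedBall (by linarith)).inter_eq, measure_empty]
  have h_ennreal : ((#S : ℝ≥0∞) ^ 2) * V ^ 2 ≤ (K * ENNReal.ofReal (a ^ finrank ℝ E)) * V ^ 2 :=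
    calc ((#S : ℝ≥0∞) ^ 2) * V ^ 2 = (∑ i ∈ S, μ (closedBall (x i) ρ)) ^ 2 := by
          simp only [h_ball, sum_const, nsmul_eq_mul]; ring
      _ ≤ (∑ p ∈ S ×ˢ S, μ (closedBall (x p.1) ρ ∩ closedBall (x p.2) ρ)) *
            μ (closedBall x₀ (a * ρ)) :=
          sq_sum_measure_le_sum_measure_inter_mul μ S (fun i _ => measurableSet_closedBall)
            measurableSet_closedBall h_sub
      _ ≤ (∑ p ∈ S ×ˢ S, if dist (x p.1) (x p.2) ≤ 2 * ρ then V else 0) *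
            (ENNReal.ofReal (a ^ finrank ℝ E) * V) := by
          rw [h_big]; gcongr with p; exact h_inter p
      _ = (K * ENNReal.ofReal (a ^ finrank ℝ E)) * V ^ 2 := by
          rw [sum_ite, sum_const_zero, add_zero, sum_const, nsmul_eq_mul]; ring
  have h_cancel := (ENNReal.mul_le_mul_iff_left (by simp [hV]) (by simp [hV'])).1 h_ennreal
  simpa [ENNReal.toReal_ofReal (by positivity : 0 ≤ a ^ finrank ℝ E)] using
    ENNReal.toReal_mono (by finiteness) h_cancel

/-- If `N_β` is the number of `βr`-near pairs among `x_1, …, x_n ∈ ℝ^d`, then for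
every `x₀` and `D ≥ 0`, the number of points within distance `D` of `x₀` is at most
`(1 + 2D/(βr))^{d/2} · √(n + 2N_β)`. -/
theorem near_count_upper_bound {d n : ℕ}
    (x : Fin n → EuclideanSpace ℝ (Fin d)) (β r : ℝ) (hβ : 0 < β) (hr : 0 < r)
    (Nβ : ℕ)
    (hNβ : Nβ = (Finset.univ.filter fun ij : Fin n × Fin n =>
        ij.1 < ij.2 ∧ dist (x ij.1) (x ij.2) ≤ β * r).card)
    (x₀ : EuclideanSpace ℝ (Fin d)) (D : ℝ) (hD : 0 ≤ D) :
    ((Finset.univ.filter fun i : Fin n => dist (x i) x₀ ≤ D).card : ℝ) ≤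
      (1 + 2 * D / (β * r)) ^ ((d : ℝ) / 2) * Real.sqrt ((n : ℝ) + 2 * (Nβ : ℝ)) := by
  set S := Finset.univ.filter fun i : Fin n => dist (x i) x₀ ≤ D
  set a := 1 + 2 * D / (β * r)
  have hpack := sq_card_le_card_near_pairs_mul_pow x S x₀ hD (ρ := β * r / 2) (by positivity)
    fun i hi => (mem_filter.1 hi).2
  have ha : 1 + D / (β * r / 2) = a := by simp only [a]; field_simp
  rw [mul_div_cancel₀ _ two_ne_zero, ha, finrank_euclideanSpace_fin] at hpack
  have hpairs : (#{p ∈ S ×ˢ S | dist (x p.1) (x p.2) ≤ β * r} : ℝ) ≤ n + 2 * Nβ := by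
    have h := card_filter_le_card_add_two_mul_card_filter_lt
      (fun i j => dist (x i) (x j) ≤ β * r) fun i j h => (dist_comm (x j) (x i)).trans_le h
    rw [Fintype.card_fin, ← hNβ] at h
    exact_mod_cast (card_le_card (filter_subset_filter _ (subset_univ _))).trans h
  calc (#S : ℝ) ≤ √(a ^ d * (n + 2 * Nβ)) :=
        Real.le_sqrt_of_sq_le (hpack.trans (by rw [mul_comm]; gcongr))
    _ = a ^ ((d : ℝ) / 2) * √(n + 2 * Nβ) := by
        rw [Real.sqrt_mul (by positivity), Real.sqrt_eq_rpow, ← Real.rpow_natCast,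
          ← Real.rpow_mul (by positivity)]
        ring_nf
end

section
/- Let x_0, x_1, …, x_n ∈ ℝ^d, let r > 0, α ≥ 1, η > 0, β > 0 and p ∈ (0,1). Let ρ : [α, ∞) → (0, ∞) be a monotonically decreasing function, and let N_β = |{(i,j) : 1 ≤ i < j ≤ n, ‖x_i − x_j‖₂ ≤ βr}|. Then Σ_{i : ‖x_i − x_0‖₂ ≥ αr} p^{1/ρ(‖x_i − x_0‖₂ / r)} ≤ p^{1/ρ(α)} · (1 + 2(α+η)/β)^{d/2} · √(2N_β + n) + p^{1/ρ(α+η)} · n. -/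
/-!
Split the points with `‖x_i - x₀‖ ≥ αr` into the near ones, within `(α + η)r` of `x₀`, and the far
ones. As `s ↦ p ^ (1 / ρ s)` is antitone, a far term is at most `p ^ (1 / ρ (α + η))` and a near
term at most `p ^ (1 / ρ α)`, so it remains to count the set `S` of near points. Let `deg i` be the
number of points of `S` within `βr` of `x_i`, itself included. Cauchy–Schwarz gives
`|S|² ≤ (∑ 1 / deg) (∑ deg)`, and double counting gives `∑ deg ≤ 2 N_β + n`. By Caro–Wei,
`∑ 1 / deg` is at most the size of some `βr`-separated subset of `S`; the disjoint balls of radius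
`βr / 2` around its points lie in the ball of radius `(α + η)r + βr / 2` around `x₀`, so comparing
volumes bounds its size by `(1 + 2(α + η)/β) ^ d`.
-/

open Finset Metric MeasureTheory Module

theorem Finset.exists_pairwise_not_rel_sum_inv_card_le {ι : Type*} [DecidableEq ι]
    {r : ι → ι → Prop} [DecidableRel r] (hrefl : ∀ i, r i i)
    (hsymm : ∀ i j, r i j → r j i) (T : Finset ι) :
    ∃ Y ⊆ T, (Y : Set ι).Pairwise (fun i j => ¬ r i j) ∧
      ∑ i ∈ T, (#{j ∈ T | r i j} : ℝ)⁻¹ ≤ #Y := by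
  induction T using Finset.strongInduction with
  | _ T ih =>
  rcases T.eq_empty_or_nonempty with rfl | hT
  · exact ⟨∅, Subset.refl _, by simp, by simp⟩
  -- greedily keep a vertex `v` of minimal closed degree and discard its neighbourhood `A`
  obtain ⟨v, hvT, hvmin⟩ := T.exists_min_image (fun i => #{j ∈ T | r i j}) hT
  set A := {j ∈ T | r v j}
  have hvA : v ∈ A := mem_filter.2 ⟨hvT, hrefl v⟩
  have hAT : A ⊆ T := filter_subset _ _
  obtain ⟨Y, hYT, hYsep, hYsum⟩ := ih (T \ A) (sdiff_ssubset hAT ⟨v, hvA⟩)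
  have hY_notMem_A : ∀ j ∈ Y, j ∈ T ∧ j ∉ A := fun j hj => mem_sdiff.1 (hYT hj)
  have hvY : v ∉ Y := fun hv => (hY_notMem_A v hv).2 hvA
  refine ⟨insert v Y, insert_subset hvT (hYT.trans sdiff_subset), ?_, ?_⟩
  · rw [coe_insert, Set.pairwise_insert]
    refine ⟨hYsep, fun j hj _ => ?_⟩
    have hvj : ¬ r v j := fun h => (hY_notMem_A j hj).2 (mem_filter.2 ⟨(hY_notMem_A j hj).1, h⟩)
    exact ⟨hvj, mt (hsymm j v) hvj⟩
  · have hA : ∑ i ∈ A, (#{j ∈ T | r i j} : ℝ)⁻¹ ≤ 1 := by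
      have hA0 : (0 : ℝ) < #A := by exact_mod_cast card_pos.2 ⟨v, hvA⟩
      calc ∑ i ∈ A, (#{j ∈ T | r i j} : ℝ)⁻¹ ≤ #A • (#A : ℝ)⁻¹ :=
            sum_le_card_nsmul _ _ _ fun i hi =>
              inv_anti₀ hA0 (by exact_mod_cast hvmin i (hAT hi))
        _ = 1 := by rw [nsmul_eq_mul, mul_inv_cancel₀ hA0.ne']
    have hrest : ∑ i ∈ T \ A, (#{j ∈ T | r i j} : ℝ)⁻¹ ≤ #Y := by
      refine le_trans (sum_le_sum fun i hi => inv_anti₀ ?_ ?_) hYsum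
      · exact_mod_cast card_pos.2 ⟨i, mem_filter.2 ⟨hi, hrefl i⟩⟩
      · exact_mod_cast card_le_card (filter_subset_filter _ sdiff_subset)
    rw [← sum_sdiff hAT, card_insert_of_notMem hvY]
    push_cast
    linarith

theorem Finset.sq_card_le_sum_inv_mul_sum {ι : Type*} (s : Finset ι) {w : ι → ℝ}
    (hw : ∀ i ∈ s, 0 < w i) : (#s : ℝ) ^ 2 ≤ (∑ i ∈ s, (w i)⁻¹) * ∑ i ∈ s, w i := by
  simpa using sum_sq_le_sum_mul_sum_of_sq_le_mul s (r := fun _ => (1 : ℝ))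
    (fun i hi => (inv_pos.2 (hw i hi)).le) (fun i hi => (hw i hi).le)
    (fun i hi => by rw [inv_mul_cancel₀ (hw i hi).ne', one_pow])

theorem Finset.sum_card_filter_rel_le {ι : Type*} [Fintype ι] [LinearOrder ι]
    {r : ι → ι → Prop} [DecidableRel r] (hsymm : ∀ i j, r i j → r j i) (S : Finset ι) :
    ∑ i ∈ S, #{j ∈ S | r i j} ≤
      2 * #{ij : ι × ι | ij.1 < ij.2 ∧ r ij.1 ij.2} + Fintype.card ι := by
  set P := ({ij : ι × ι | ij.1 < ij.2 ∧ r ij.1 ij.2} : Finset (ι × ι))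
  have hcover : {ij ∈ S ×ˢ S | r ij.1 ij.2} ⊆ P ∪ P.image Prod.swap ∪ univ.diag := by
    rintro ⟨i, j⟩ hij
    have hr : r i j := (mem_filter.1 hij).2
    rcases lt_trichotomy i j with h | rfl | h
    · simp [P, h, hr]
    · simp
    · exact mem_union_left _ <| mem_union_right _ <|
        mem_image.2 ⟨(j, i), mem_filter.2 ⟨mem_univ _, h, hsymm i j hr⟩, rfl⟩
  calc ∑ i ∈ S, #{j ∈ S | r i j} = #{ij ∈ S ×ˢ S | r ij.1 ij.2} := by
        rw [card_filter, sum_product]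
        exact sum_congr rfl fun i _ => card_filter _ _
    _ ≤ #P + #(P.image Prod.swap) + #(univ.diag : Finset (ι × ι)) :=
        (card_le_card hcover).trans <|
          (card_union_le _ _).trans (Nat.add_le_add_right (card_union_le _ _) _)
    _ ≤ 2 * #P + Fintype.card ι := by
        rw [diag_card, card_univ]
        linarith [card_image_le (s := P) (f := Prod.swap)]

theorem card_mul_pow_le_of_pairwise_le_dist {ι E : Type*} [NormedAddCommGroup E]
    [NormedSpace ℝ E] [FiniteDimensional ℝ E] {x : ι → E} {Y : Finset ι} {c : E} {R δ : ℝ}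
    (hδ : 0 < δ) (hR : 0 ≤ R) (hY : ∀ i ∈ Y, dist (x i) c ≤ R)
    (hsep : (Y : Set ι).Pairwise fun i j => δ ≤ dist (x i) (x j)) :
    #Y * (δ / 2) ^ finrank ℝ E ≤ (R + δ / 2) ^ finrank ℝ E := by
  borelize E
  set μ : Measure E := Measure.addHaar
  have hδ2 : 0 < δ / 2 := half_pos hδ
  have hdisj : (Y : Set ι).PairwiseDisjoint fun i => ball (x i) (δ / 2) :=
    fun i hi j hj hij => ball_disjoint_ball (by linarith [hsep hi hj hij])
  have hsub : (⋃ i ∈ Y, ball (x i) (δ / 2)) ⊆ ball c (R + δ / 2) :=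
    Set.iUnion₂_subset fun i hi => ball_subset_ball' (by linarith [hY i hi])
  have hvol : (#Y : ENNReal) * ENNReal.ofReal ((δ / 2) ^ finrank ℝ E) * μ (ball 0 1) ≤
      ENNReal.ofReal ((R + δ / 2) ^ finrank ℝ E) * μ (ball 0 1) :=
    calc (#Y : ENNReal) * ENNReal.ofReal ((δ / 2) ^ finrank ℝ E) * μ (ball 0 1)
        = μ (⋃ i ∈ Y, ball (x i) (δ / 2)) := by
          rw [measure_biUnion_finset hdisj fun i _ => measurableSet_ball]
          simp only [μ.addHaar_ball_of_pos _ hδ2, sum_const, nsmul_eq_mul, mul_assoc]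
      _ ≤ μ (ball c (R + δ / 2)) := measure_mono hsub
      _ = ENNReal.ofReal ((R + δ / 2) ^ finrank ℝ E) * μ (ball 0 1) :=
          μ.addHaar_ball_of_pos _ (by linarith)
  have hvol' := (ENNReal.mul_le_mul_iff_left (measure_ball_pos μ _ one_pos).ne'
    measure_ball_lt_top.ne).1 hvol
  rw [← ENNReal.ofReal_natCast, ← ENNReal.ofReal_mul (Nat.cast_nonneg _)] at hvol'
  exact (ENNReal.ofReal_le_ofReal_iff (by positivity)).1 hvol'

theorem sq_card_le_of_forall_dist_le {ι E : Type*} [Fintype ι] [LinearOrder ι]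
    [NormedAddCommGroup E] [NormedSpace ℝ E] [FiniteDimensional ℝ E] (x : ι → E)
    {S : Finset ι} {c : E} {R δ : ℝ} (hδ : 0 < δ) (hR : 0 ≤ R)
    (hS : ∀ i ∈ S, dist (x i) c ≤ R) :
    (#S : ℝ) ^ 2 ≤ (1 + 2 * R / δ) ^ finrank ℝ E *
      (2 * #{ij : ι × ι | ij.1 < ij.2 ∧ dist (x ij.1) (x ij.2) ≤ δ} + Fintype.card ι) := by
  set deg : ι → ℕ := fun i => #{j ∈ S | dist (x i) (x j) ≤ δ}
  have hdeg_pos : ∀ i ∈ S, (0 : ℝ) < deg i := fun i hi => by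
    exact_mod_cast card_pos.2 ⟨i, mem_filter.2 ⟨hi, by simpa using hδ.le⟩⟩
  obtain ⟨Y, hYS, hYsep, hYsum⟩ := exists_pairwise_not_rel_sum_inv_card_le
    (r := fun i j => dist (x i) (x j) ≤ δ) (fun i => by simpa using hδ.le)
    (fun i j h => by rwa [dist_comm]) S
  have hY : (#Y : ℝ) ≤ (1 + 2 * R / δ) ^ finrank ℝ E := by
    have hpack := card_mul_pow_le_of_pairwise_le_dist hδ hR (fun i hi => hS i (hYS hi))
      (hYsep.mono' fun i j h => (not_le.1 h).le)
    rw [show R + δ / 2 = (1 + 2 * R / δ) * (δ / 2) by field_simp; ring, mul_pow] at hpack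
    exact le_of_mul_le_mul_right hpack (by positivity)
  have hdeg_sum : (∑ i ∈ S, (deg i : ℝ)) ≤
      2 * #{ij : ι × ι | ij.1 < ij.2 ∧ dist (x ij.1) (x ij.2) ≤ δ} + Fintype.card ι := by
    exact_mod_cast sum_card_filter_rel_le (fun i j h => by rwa [dist_comm]) S
  calc (#S : ℝ) ^ 2 ≤ (∑ i ∈ S, (deg i : ℝ)⁻¹) * ∑ i ∈ S, (deg i : ℝ) :=
        sq_card_le_sum_inv_mul_sum S hdeg_pos
    _ ≤ #Y * (2 * #{ij : ι × ι | ij.1 < ij.2 ∧ dist (x ij.1) (x ij.2) ≤ δ} +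
          Fintype.card ι) :=
        mul_le_mul hYsum hdeg_sum (sum_nonneg fun _ _ => Nat.cast_nonneg _)
          (Nat.cast_nonneg _)
    _ ≤ _ := mul_le_mul_of_nonneg_right hY (by positivity)

theorem le_rpow_div_two_mul_sqrt_of_sq_le {a K X : ℝ} {d : ℕ} (hK : 0 ≤ K)
    (h : a ^ 2 ≤ K ^ d * X) : a ≤ K ^ ((d : ℝ) / 2) * √X := by
  have hKd : K ^ ((d : ℝ) / 2) = √(K ^ d) := by
    rw [Real.sqrt_eq_rpow, ← Real.rpow_natCast, ← Real.rpow_mul hK, mul_one_div]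
  rw [hKd, ← Real.sqrt_mul (pow_nonneg hK d)]
  exact (le_abs_self a).trans (Real.abs_le_sqrt h)

theorem antitoneOn_rpow_one_div {ρ : ℝ → ℝ} {α p : ℝ} (hp0 : 0 < p)
    (hp1 : p ≤ 1) (hρpos : ∀ s, α ≤ s → 0 < ρ s) (hρ : AntitoneOn ρ (Set.Ici α)) :
    AntitoneOn (fun s => p ^ (1 / ρ s)) (Set.Ici α) := fun _ hs t ht hst =>
  Real.rpow_le_rpow_of_exponent_ge hp0 hp1 (one_div_le_one_div_of_le (hρpos t ht) (hρ hs ht hst))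

/-- Lemma 3: for a monotonically decreasing, positive LSH exponent `ρ` on `[α, ∞)`
and `p ∈ (0,1)`,
`Σ_{i : ‖x_i − x₀‖ ≥ αr} p^{1/ρ(‖x_i − x₀‖/r)}
  ≤ p^{1/ρ(α)} (1 + 2(α+η)/β)^{d/2} √(2N_β + n) + p^{1/ρ(α+η)} n`. -/
theorem lsh_sum_bound {d n : ℕ}
    (x₀ : EuclideanSpace ℝ (Fin d)) (x : Fin n → EuclideanSpace ℝ (Fin d))
    (r α η β p : ℝ) (hr : 0 < r) (hα : 1 ≤ α) (hη : 0 < η) (hβ : 0 < β)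
    (hp0 : 0 < p) (hp1 : p < 1)
    (ρ : ℝ → ℝ) (hρpos : ∀ s, α ≤ s → 0 < ρ s) (hρdec : AntitoneOn ρ (Set.Ici α))
    (Nβ : ℕ)
    (hNβ : Nβ = (Finset.univ.filter fun ij : Fin n × Fin n =>
        ij.1 < ij.2 ∧ dist (x ij.1) (x ij.2) ≤ β * r).card) :
    ∑ i ∈ Finset.univ.filter fun i : Fin n => α * r ≤ dist (x i) x₀,
        p ^ ((1 : ℝ) / ρ (dist (x i) x₀ / r)) ≤
      p ^ ((1 : ℝ) / ρ α) * (1 + 2 * (α + η) / β) ^ ((d : ℝ) / 2) *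
          Real.sqrt (2 * (Nβ : ℝ) + (n : ℝ)) +
        p ^ ((1 : ℝ) / ρ (α + η)) * (n : ℝ) := by
  set F := ({i | α * r ≤ dist (x i) x₀} : Finset (Fin n))
  set near := ({i ∈ F | dist (x i) x₀ ≤ (α + η) * r} : Finset (Fin n))
  set far := ({i ∈ F | ¬ dist (x i) x₀ ≤ (α + η) * r} : Finset (Fin n))
  have hanti := antitoneOn_rpow_one_div hp0 hp1.le hρpos hρdec
  have hF : ∀ i ∈ F, α ≤ dist (x i) x₀ / r := fun i hi =>
    (le_div_iff₀ hr).2 (mem_filter.1 hi).2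
  have hnear : ∀ i ∈ near, p ^ (1 / ρ (dist (x i) x₀ / r)) ≤ p ^ (1 / ρ α) := fun i hi =>
    hanti Set.self_mem_Ici (hF i (filter_subset _ _ hi)) (hF i (filter_subset _ _ hi))
  have hfar : ∀ i ∈ far, p ^ (1 / ρ (dist (x i) x₀ / r)) ≤ p ^ (1 / ρ (α + η)) := by
    intro i hi
    have hαη : α + η ≤ dist (x i) x₀ / r :=
      (le_div_iff₀ hr).2 (not_le.1 (mem_filter.1 hi).2).le
    exact hanti (by simp [hη.le]) (hF i (filter_subset _ _ hi)) hαη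
  have hcard_near : (#near : ℝ) ≤ (1 + 2 * (α + η) / β) ^ ((d : ℝ) / 2) *
      √(2 * (Nβ : ℝ) + (n : ℝ)) := by
    refine le_rpow_div_two_mul_sqrt_of_sq_le (by positivity) ?_
    have := sq_card_le_of_forall_dist_le x (mul_pos hβ hr) (by positivity)
      (fun i hi => (mem_filter.1 hi).2 : ∀ i ∈ near, dist (x i) x₀ ≤ (α + η) * r)
    rwa [finrank_euclideanSpace_fin, Fintype.card_fin, ← hNβ, mul_div_assoc,
      mul_div_mul_right _ _ hr.ne', ← mul_div_assoc] at this
  have hcard_far : (#far : ℝ) ≤ n := by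
    exact_mod_cast (card_le_univ far).trans_eq (Fintype.card_fin n)
  rw [← sum_filter_add_sum_filter_not F (fun i => dist (x i) x₀ ≤ (α + η) * r)]
  refine add_le_add ((sum_le_card_nsmul _ _ _ hnear).trans ?_)
    ((sum_le_card_nsmul _ _ _ hfar).trans ?_) <;> rw [nsmul_eq_mul, mul_comm]
  · rw [mul_assoc]
    exact mul_le_mul_of_nonneg_left hcard_near (by positivity)
  · exact mul_le_mul_of_nonneg_left hcard_far (by positivity)
end

section
/- Let x_0, x_1, …, x_n ∈ ℝ^d with n ≥ 1, let r > 0, β > 0, p ∈ (0,1), and let ρ : [α, ∞) → (0, ∞) be a monotonically decreasing function defined at some α ≥ 1. Suppose μ > α satisfies ρ(μ) = ρ(α)/2. Let N_β = |{(i,j) : 1 ≤ i < j ≤ n, ‖x_i − x_j‖₂ ≤ βr}|, set M = (1 + 2μ/β)^{d/2} · √(2N_β + n), and choose the real parameter K = ρ(α) · log M / log(1/p) (so that p^K = M^{−ρ(α)}). Then p^{−K} · (1 + Σ_{i : ‖x_i − x_0‖₂ ≥ αr} p^{K/ρ(‖x_i − x_0‖₂ / r)}) ≤ 3 · M^{ρ(α)}.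 -/
/-!
With `p ^ K = M ^ (-ρ α)`, each term `p ^ (K / ρ (s_i))` equals `M ^ (-ρ α / ρ s_i)`. Since `ρ`
is antitone, the exponent `ρ α / ρ s_i` is at least `1`, and at least `2` once `s_i ≥ μ`. There
are at most `n ≤ M²` far points, contributing at most `1` in total, and by a volume packing
argument at most `M` points within distance `μ r` of `x₀`, contributing at most `1` as well.

The packing bound is Cauchy–Schwarz for `f = ∑ 1_{B(x_i, βr/2)}` over the `t` points near `x₀`:
`f` is supported in `B(x₀, μr + βr/2)`, `∫ f = t · vol B(βr/2)`, and `∫ f²` is at most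
`vol B(βr/2)` times the number of ordered pairs at distance `≤ βr`, which is `≤ 2 N_β + n`.
Comparing volumes gives `t² ≤ (1 + 2μ/β)^d (2 N_β + n) = M²`.
-/

open MeasureTheory Finset Metric Module

theorem ENNReal.sq_lintegral_le_measure_mul_lintegral_sq {α : Type*} [MeasurableSpace α]
    {μ : Measure α} {f : α → ENNReal} {s : Set α} (hf : AEMeasurable f μ)
    (hs : MeasurableSet s) (hfs : ∀ a ∉ s, f a = 0) :
    (∫⁻ a, f a ∂μ) ^ 2 ≤ μ s * ∫⁻ a, f a ^ 2 ∂μ := by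
  have hsplit : ∀ a, (f a ^ 2) ^ (1 / 2 : ℝ) * s.indicator 1 a ^ (1 / 2 : ℝ) = f a := by
    intro a
    by_cases ha : a ∈ s
    · rw [Set.indicator_of_mem ha, Pi.one_apply, ENNReal.one_rpow, mul_one,
        ← ENNReal.rpow_natCast, ← ENNReal.rpow_mul]
      norm_num
    · simp [hfs a ha]
  have hholder := ENNReal.lintegral_mul_norm_pow_le (hf.pow_const 2)
    (g := s.indicator 1) (aemeasurable_one.indicator hs) (p := 1 / 2) (q := 1 / 2)
    (by norm_num) (by norm_num) (by norm_num)
  rw [lintegral_congr hsplit, lintegral_indicator_one hs] at hholder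
  calc (∫⁻ a, f a ∂μ) ^ 2
      ≤ ((∫⁻ a, f a ^ 2 ∂μ) ^ (1 / 2 : ℝ) * μ s ^ (1 / 2 : ℝ)) ^ 2 := by gcongr
    _ = μ s * ∫⁻ a, f a ^ 2 ∂μ := by
      rw [mul_pow, ← ENNReal.rpow_natCast, ← ENNReal.rpow_natCast (μ s ^ _), ← ENNReal.rpow_mul,
        ← ENNReal.rpow_mul]
      norm_num [mul_comm]

theorem card_filter_le_two_mul_card_filter_lt_add {ι : Type*} [Fintype ι] [LinearOrder ι]
    (R : ι → ι → Prop) [DecidableRel R] (hR : ∀ i j, R i j → R j i) :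
    #{ij : ι × ι | R ij.1 ij.2} ≤
      2 * #{ij : ι × ι | ij.1 < ij.2 ∧ R ij.1 ij.2} + Fintype.card ι := by
  set A : Finset (ι × ι) := {ij | ij.1 < ij.2 ∧ R ij.1 ij.2}
  have hsub : ({ij : ι × ι | R ij.1 ij.2} : Finset _) ⊆
      A ∪ A.map (Equiv.prodComm ι ι).toEmbedding ∪ univ.diag := by
    rintro ⟨i, j⟩ hij
    simp only [mem_filter, mem_univ, true_and] at hij
    rcases lt_trichotomy i j with h | rfl | h
    · simp [A, h, hij]
    · simp
    · simp [A, h, hR _ _ hij]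
  calc _ ≤ #(A ∪ A.map (Equiv.prodComm ι ι).toEmbedding ∪ univ.diag) := card_le_card hsub
    _ ≤ #A + #A + Fintype.card ι := by
      grw [card_union_le, card_union_le, card_map, diag_card, card_univ]
    _ = _ := by ring

theorem lintegral_sum_indicator_ball {E ι : Type*} [NormedAddCommGroup E] [MeasurableSpace E]
    [BorelSpace E] (μ : Measure E) [μ.IsAddHaarMeasure] (T : Finset ι) (z : ι → E) (s : ℝ) :
    ∫⁻ y, ∑ k ∈ T, (ball (z k) s).indicator 1 y ∂μ = #T * μ (ball 0 s) := by
  rw [lintegral_finsetSum _ fun k _ => measurable_one.indicator measurableSet_ball]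
  simp [lintegral_indicator_one measurableSet_ball, Measure.addHaar_ball_center μ]

theorem sq_sum_indicator_ball_le {X ι : Type*} [PseudoMetricSpace X] (S : Finset ι) (x : ι → X)
    (s : ℝ) (y : X) :
    (∑ i ∈ S, (ball (x i) s).indicator (1 : X → ENNReal) y) ^ 2 ≤
      ∑ ij ∈ S ×ˢ S with dist (x ij.1) (x ij.2) ≤ 2 * s, (ball (x ij.1) s).indicator 1 y := by
  rw [sq, sum_mul_sum, ← sum_product', sum_filter]
  gcongr with ij
  by_cases hi : y ∈ ball (x ij.1) s
  · by_cases hj : y ∈ ball (x ij.2) s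
    · have hij : dist (x ij.1) (x ij.2) ≤ 2 * s := by
        rw [mem_ball'] at hi
        rw [mem_ball] at hj
        linarith [dist_triangle (x ij.1) y (x ij.2)]
      simp [hi, hj, hij]
    · simp [hj]
  · simp [hi]

theorem card_sq_mul_pow_le_of_forall_dist_le {E ι : Type*} [NormedAddCommGroup E]
    [NormedSpace ℝ E] [FiniteDimensional ℝ E] (S : Finset ι) (x : ι → E) (x₀ : E) {R s : ℝ}
    (hR : 0 ≤ R) (hs : 0 < s) (hS : ∀ i ∈ S, dist (x i) x₀ ≤ R) :
    (#S : ℝ) ^ 2 * s ^ finrank ℝ E ≤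
      (R + s) ^ finrank ℝ E * #{ij ∈ S ×ˢ S | dist (x ij.1) (x ij.2) ≤ 2 * s} := by
  borelize E
  set μ : Measure E := Measure.addHaar
  have hsupp : ∀ y ∉ ball x₀ (R + s),
      ∑ i ∈ S, (ball (x i) s).indicator (1 : E → ENNReal) y = 0 := by
    intro y hy
    refine sum_eq_zero fun i hi => Set.indicator_of_notMem (fun hyi => hy ?_) _
    rw [mem_ball] at hyi ⊢
    linarith [dist_triangle y (x i) x₀, hS i hi]
  have hCS := ENNReal.sq_lintegral_le_measure_mul_lintegral_sq (μ := μ)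
    (Finset.aemeasurable_fun_sum _ fun i _ =>
      (measurable_one.indicator measurableSet_ball).aemeasurable)
    measurableSet_ball hsupp
  grw [lintegral_mono (sq_sum_indicator_ball_le S x s), lintegral_sum_indicator_ball,
    lintegral_sum_indicator_ball] at hCS
  rw [Measure.addHaar_ball_of_pos μ _ hs,
    Measure.addHaar_ball_of_pos μ x₀ (by positivity : 0 < R + s)] at hCS
  set c := μ (ball 0 1)
  have hc : 0 < c.toReal :=
    ENNReal.toReal_pos (measure_ball_pos μ 0 one_pos).ne' measure_ball_lt_top.ne
  have hreal := ENNReal.toReal_mono (by finiteness) hCS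
  simp only [ENNReal.toReal_mul, ENNReal.toReal_pow, ENNReal.toReal_natCast] at hreal
  rw [ENNReal.toReal_ofReal (by positivity), ENNReal.toReal_ofReal (by positivity)] at hreal
  refine le_of_mul_le_mul_right ?_ (by positivity : 0 < s ^ finrank ℝ E * c.toReal ^ 2)
  linear_combination hreal

theorem sq_rpow_half_mul_sqrt {b c : ℝ} (hb : 0 ≤ b) (hc : 0 ≤ c) (d : ℕ) :
    (b ^ ((d : ℝ) / 2) * √c) ^ 2 = b ^ d * c := by
  rw [mul_pow, Real.sq_sqrt hc, ← Real.rpow_natCast (b ^ _), ← Real.rpow_mul hb]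
  norm_num

theorem card_filter_dist_le_le_rpow_half_mul_sqrt {E ι : Type*} [NormedAddCommGroup E]
    [NormedSpace ℝ E] [FiniteDimensional ℝ E] [Fintype ι] [LinearOrder ι] (x : ι → E) (x₀ : E)
    {R c : ℝ} (hR : 0 ≤ R) (hc : 0 < c) :
    (#{i | dist (x i) x₀ ≤ R} : ℝ) ≤ (1 + 2 * R / c) ^ ((finrank ℝ E : ℝ) / 2) *
      √(2 * #{ij : ι × ι | ij.1 < ij.2 ∧ dist (x ij.1) (x ij.2) ≤ c} + Fintype.card ι) := by
  set S : Finset ι := {i | dist (x i) x₀ ≤ R}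
  have hpack := card_sq_mul_pow_le_of_forall_dist_le S x x₀ hR (half_pos hc) (by simp [S])
  have hpairs : #{ij ∈ S ×ˢ S | dist (x ij.1) (x ij.2) ≤ 2 * (c / 2)} ≤
      2 * #{ij : ι × ι | ij.1 < ij.2 ∧ dist (x ij.1) (x ij.2) ≤ c} + Fintype.card ι := by
    refine (card_le_card fun ij hij => ?_).trans
      (card_filter_le_two_mul_card_filter_lt_add (fun i j => dist (x i) (x j) ≤ c)
        fun i j h => (dist_comm (x j) (x i)).trans_le h)
    simp only [mem_filter] at hij
    simpa [mul_div_cancel₀ c two_ne_zero] using hij.2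
  refine (pow_le_pow_iff_left₀ (by positivity) (by positivity) two_ne_zero).1 ?_
  rw [sq_rpow_half_mul_sqrt (by positivity) (by positivity),
    show 1 + 2 * R / c = (R + c / 2) / (c / 2) by field_simp; ring, div_pow,
    div_mul_eq_mul_div, le_div_iff₀ (by positivity)]
  refine hpack.trans ?_
  gcongr
  exact_mod_cast hpairs

theorem natCast_le_sq_rpow_half_mul_sqrt {b : ℝ} (hb : 1 ≤ b) (d N n : ℕ) :
    (n : ℝ) ≤ (b ^ ((d : ℝ) / 2) * √(2 * N + n)) ^ 2 := by
  rw [sq_rpow_half_mul_sqrt (by positivity) (by positivity)]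
  nlinarith [one_le_pow₀ (n := d) hb, (Nat.cast_nonneg N : (0 : ℝ) ≤ N)]

theorem rpow_mul_log_div_log_inv {p : ℝ} (hp0 : 0 < p) (hp1 : p ≠ 1) {M : ℝ} (hM : 0 < M)
    (a : ℝ) : p ^ (a * Real.log M / Real.log (1 / p)) = M ^ (-a) := by
  have hlogp : Real.log p ≠ 0 := Real.log_ne_zero_of_pos_of_ne_one hp0 hp1
  rw [Real.rpow_def_of_pos hp0, Real.rpow_def_of_pos hM, one_div, Real.log_inv]
  field_simp

theorem sum_rpow_neg_le_two {ι : Type*} (F : Finset ι) {M : ℝ} (hM : 1 ≤ M) (e : ι → ℝ)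
    (he : ∀ i ∈ F, 1 ≤ e i) (hnear : (#{i ∈ F | e i < 2} : ℝ) ≤ M) (hF : (#F : ℝ) ≤ M ^ 2) :
    ∑ i ∈ F, M ^ (-e i) ≤ 2 := by
  have hM0 : 0 < M := by linarith
  rw [← sum_filter_add_sum_filter_not F (fun i => e i < 2)]
  have hnear_sum : ∑ i ∈ F with e i < 2, M ^ (-e i) ≤ 1 := by
    calc ∑ i ∈ F with e i < 2, M ^ (-e i)
        ≤ #{i ∈ F | e i < 2} • M ^ (-1 : ℝ) := by
          refine sum_le_card_nsmul _ _ _ fun i hi => ?_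
          exact Real.rpow_le_rpow_of_exponent_le hM (by linarith [he i (mem_filter.1 hi).1])
      _ ≤ M * M⁻¹ := by rw [nsmul_eq_mul, Real.rpow_neg_one]; gcongr
      _ = 1 := mul_inv_cancel₀ hM0.ne'
  have hfar_sum : ∑ i ∈ F with ¬ e i < 2, M ^ (-e i) ≤ 1 := by
    calc ∑ i ∈ F with ¬ e i < 2, M ^ (-e i)
        ≤ #{i ∈ F | ¬ e i < 2} • M ^ (-2 : ℝ) := by
          refine sum_le_card_nsmul _ _ _ fun i hi => ?_
          exact Real.rpow_le_rpow_of_exponent_le hM (by linarith [(mem_filter.1 hi).2])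
      _ ≤ M ^ 2 * (M ^ 2)⁻¹ := by
          rw [nsmul_eq_mul, Real.rpow_neg hM0.le, Real.rpow_two]
          gcongr
          exact (Nat.cast_le.2 (card_filter_le _ _)).trans hF
      _ = 1 := mul_inv_cancel₀ (by positivity)
  linarith

theorem sum_rpow_neg_div_le_two {ι : Type*} (F : Finset ι) {M : ℝ} (hM : 1 ≤ M)
    {ρ : ℝ → ℝ} {α μ : ℝ} (hρpos : ∀ s, α ≤ s → 0 < ρ s) (hρdec : AntitoneOn ρ (Set.Ici α))
    (hμ : α ≤ μ) (hρμ : ρ μ = ρ α / 2) (s : ι → ℝ) (hs : ∀ i ∈ F, α ≤ s i)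
    (hnear : (#{i ∈ F | s i < μ} : ℝ) ≤ M) (hF : (#F : ℝ) ≤ M ^ 2) :
    ∑ i ∈ F, M ^ (-(ρ α / ρ (s i))) ≤ 2 := by
  refine sum_rpow_neg_le_two F hM _ (fun i hi => ?_) (hnear.trans' ?_) hF
  · exact (one_le_div (hρpos _ (hs i hi))).2 (hρdec Set.self_mem_Ici (hs i hi) (hs i hi))
  · refine Nat.cast_le.2 (card_le_card fun i hi => ?_)
    obtain ⟨hiF, hi2⟩ := mem_filter.1 hi
    refine mem_filter.2 ⟨hiF, ?_⟩
    by_contra! hfar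
    have := hρdec (Set.mem_Ici.2 hμ) (hs i hiF) hfar
    rw [div_lt_iff₀ (hρpos _ (hs i hiF))] at hi2
    linarith

/-- Theorem 4 (analytic core): with `M = (1 + 2μ/β)^{d/2} √(2N_β + n)`,
`ρ(μ) = ρ(α)/2`, and `K = ρ(α)·log M / log(1/p)` (so `p^K = M^{-ρ(α)}`),
`p^{-K} (1 + Σ_{i : ‖x_i − x₀‖ ≥ αr} p^{K/ρ(‖x_i − x₀‖/r)}) ≤ 3 M^{ρ(α)}`. -/
theorem lsh_query_bound {d n : ℕ} (hn : 0 < n)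
    (x₀ : EuclideanSpace ℝ (Fin d)) (x : Fin n → EuclideanSpace ℝ (Fin d))
    (r α β p : ℝ) (hr : 0 < r) (hα : 1 ≤ α) (hβ : 0 < β) (hp0 : 0 < p) (hp1 : p < 1)
    (ρ : ℝ → ℝ) (hρpos : ∀ s, α ≤ s → 0 < ρ s) (hρdec : AntitoneOn ρ (Set.Ici α))
    (μ : ℝ) (hμ : α < μ) (hρμ : ρ μ = ρ α / 2)
    (Nβ : ℕ)
    (hNβ : Nβ = (Finset.univ.filter fun ij : Fin n × Fin n =>
        ij.1 < ij.2 ∧ dist (x ij.1) (x ij.2) ≤ β * r).card)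
    (M K : ℝ)
    (hM : M = (1 + 2 * μ / β) ^ ((d : ℝ) / 2) * Real.sqrt (2 * (Nβ : ℝ) + (n : ℝ)))
    (hK : K = ρ α * Real.log M / Real.log (1 / p)) :
    p ^ (-K) * (1 + ∑ i ∈ Finset.univ.filter fun i : Fin n => α * r ≤ dist (x i) x₀,
        p ^ (K / ρ (dist (x i) x₀ / r))) ≤ 3 * M ^ ρ α := by
  have hμ0 : 0 < μ := by linarith
  have hnM : (n : ℝ) ≤ M ^ 2 :=
    hM ▸ natCast_le_sq_rpow_half_mul_sqrt (le_add_of_nonneg_right (by positivity)) d Nβ n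
  have hM1 : 1 ≤ M := by
    have hM0 : 0 ≤ M := hM ▸ by positivity
    nlinarith [(Nat.one_le_cast (α := ℝ)).2 hn]
  have hM0 : 0 < M := by linarith
  have hclose : (#{i | dist (x i) x₀ ≤ μ * r} : ℝ) ≤ M := by
    have h := card_filter_dist_le_le_rpow_half_mul_sqrt x x₀ (by positivity : 0 ≤ μ * r)
      (by positivity : 0 < β * r)
    rwa [finrank_euclideanSpace_fin, Fintype.card_fin, ← hNβ,
      show 2 * (μ * r) / (β * r) = 2 * μ / β by field_simp, ← hM] at h
  have hpK : p ^ (-K) = M ^ ρ α := by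
    rw [hK, ← neg_div, ← neg_mul, rpow_mul_log_div_log_inv hp0 hp1.ne hM0, neg_neg]
  have hterm : ∀ s, p ^ (K / ρ s) = M ^ (-(ρ α / ρ s)) := fun s => by
    rw [← rpow_mul_log_div_log_inv hp0 hp1.ne hM0, hK]
    ring_nf
  have hsum : ∑ i ∈ Finset.univ.filter fun i : Fin n => α * r ≤ dist (x i) x₀,
      p ^ (K / ρ (dist (x i) x₀ / r)) ≤ 2 := by
    simp only [hterm]
    refine sum_rpow_neg_div_le_two _ hM1 hρpos hρdec hμ.le hρμ _
      (fun i hi => (le_div_iff₀ hr).2 (mem_filter.1 hi).2) (hclose.trans' ?_)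
      (hnM.trans' (by exact_mod_cast (card_le_univ _).trans (Fintype.card_fin n).le))
    refine Nat.cast_le.2 (card_le_card fun i hi => mem_filter.2 ⟨mem_univ i, ?_⟩)
    exact ((div_lt_iff₀ hr).1 (mem_filter.1 hi).2).le
  rw [hpK]
  nlinarith [Real.rpow_nonneg hM0.le (ρ α)]
end

section
/- Let q ∈ [1,2] and equip ℝ^d with the ℓ_q norm ‖·‖_q. Let x_0, x_1, …, x_n ∈ ℝ^d with n ≥ 1, let r > 0, β > 0, α ≥ 1, c ∈ (0,1), and let N_β = |{(i,j) : 1 ≤ i < j ≤ n, ‖x_i − x_j‖_q ≤ βr}|. Suppose the finite set {x_0, x_1, …, x_n} (with the ℓ_q metric) has doubling dimension at most d_0 + 1, i.e., every subset Y of it can be covered by at most 2^{d_0+1} subsets each of ℓ_q-diameter at most half the ℓ_q-diameter of Y. Set M = (1 + 8α/β)^{(d_0+1)/2} · √(2N_β + 2n) and choose the real parameter K = (1/α) · log M / log(1/c). Then c^{−K} · (1 + Σ_{i : ‖x_i − x_0‖_q ≥ αr} c^{K·‖x_i − x_0‖_q / r}) ≤ 3 · (1 + 8α/β)^{(d_0+1)/(2α)}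 · (2N_β + 2n)^{1/(2α)}. -/
open scoped ENNReal

/-!
The choice of `K` makes `c ^ (-K) = M ^ (1/α)` and `c ^ (K t / r) = M ^ (-t/(α r))`, so the claim
reduces to: the far points contribute at most `2`. Group them into dyadic annuli
`2^j α r ≤ ‖x_i - x₀‖ < 2^(j+1) α r`. An annulus has diameter below `2^(j+2) α r`, so about
`log₂ (2^(j+2) α / β)` rounds of doubling cover it by at most `(1 + 8α/β)^(2^j (d₀+1))` sets of
diameter `≤ β r` (Bernoulli). Points in a common set form `β r`-close pairs, so Cauchy–Schwarz over
the sets bounds the annulus size by `√((1 + 8α/β)^(2^j (d₀+1)) (2 N_β + 2n)) ≤ 2^(-j) M^(2^j)`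
once `2 N_β + 2n ≥ 4`, while each of its points contributes at most `M^(-2^j)`. The geometric
series then sums to `2`.
-/

open Finset

section Doubling

variable {E : Type*} [PseudoEMetricSpace E]

def HasDoublingCovers (S : Set E) (D : ℕ) : Prop :=
  ∀ Y ⊆ S, ∃ f : Fin D → Set E,
    Y ⊆ ⋃ i, f i ∧ ∀ i, Metric.ediam (f i) ≤ Metric.ediam Y / 2

theorem HasDoublingCovers.iterate {S : Set E} {D : ℕ} (h : HasDoublingCovers S D) (s : ℕ)
    {Y : Set E} (hY : Y ⊆ S) :
    ∃ f : (Fin s → Fin D) → Set E,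
      Y ⊆ ⋃ v, f v ∧ ∀ v, Metric.ediam (f v) ≤ Metric.ediam Y / 2 ^ s := by
  induction s with
  | zero => exact ⟨fun _ => Y, Set.subset_iUnion (fun _ => Y) finZeroElim, by simp⟩
  | succ s ih =>
    obtain ⟨f, hfY, hf⟩ := ih
    choose g hg hgf using fun v => h (f v ∩ Y) (Set.inter_subset_right.trans hY)
    refine ⟨fun v => g (Fin.tail v) (v 0), fun y hy => ?_, fun v => ?_⟩
    · obtain ⟨v, hv⟩ := Set.mem_iUnion.1 (hfY hy)
      obtain ⟨j, hj⟩ := Set.mem_iUnion.1 (hg v ⟨hv, hy⟩)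
      exact Set.mem_iUnion.2 ⟨Fin.cons j v, by simpa using hj⟩
    · calc Metric.ediam (g (Fin.tail v) (v 0))
          ≤ Metric.ediam (f (Fin.tail v) ∩ Y) / 2 := hgf _ _
        _ ≤ Metric.ediam Y / 2 ^ s / 2 := by
          gcongr
          exact (Metric.ediam_mono Set.inter_subset_left).trans (hf _)
        _ = Metric.ediam Y / 2 ^ (s + 1) := by
          rw [pow_succ, div_eq_mul_inv, div_eq_mul_inv, div_eq_mul_inv, mul_assoc,
            ENNReal.mul_inv (by simp) (by simp)]

end Doubling

theorem sq_card_le_card_mul_card_filter_eq {ι κ : Type*} [Fintype κ] [DecidableEq κ]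
    (g : ι → κ) (T : Finset ι) :
    #T ^ 2 ≤ Fintype.card κ * #{p ∈ T ×ˢ T | g p.1 = g p.2} := by
  have hT : #T = ∑ k, #{i ∈ T | g i = k} := card_eq_sum_card_fiberwise (by simp)
  have hpairs : #{p ∈ T ×ˢ T | g p.1 = g p.2} = ∑ k, #{i ∈ T | g i = k} ^ 2 := by
    rw [card_eq_sum_card_fiberwise (f := fun p => g p.1) (t := univ) (by simp)]
    refine sum_congr rfl fun k _ => ?_
    rw [sq, ← card_product]
    congr 1
    ext p
    simp only [mem_filter, mem_product]
    grind
  rw [hT, hpairs]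
  exact sq_sum_le_card_mul_sum_sq

section ClosePairs

variable {ι E : Type*} [Fintype ι] [LinearOrder ι] [PseudoMetricSpace E]

noncomputable def closePairs (x : ι → E) (w : ℝ) : Finset (ι × ι) :=
  {p | p.1 < p.2 ∧ dist (x p.1) (x p.2) ≤ w}

theorem card_filter_dist_le_le (x : ι → E) (w : ℝ) :
    #{p : ι × ι | dist (x p.1) (x p.2) ≤ w} ≤ Fintype.card ι + 2 * #(closePairs x w) := by
  calc #{p : ι × ι | dist (x p.1) (x p.2) ≤ w}
      ≤ #(univ.diag ∪ closePairs x w ∪ (closePairs x w).image Prod.swap) := by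
        refine card_le_card fun p hp => ?_
        simp only [closePairs, mem_filter, mem_univ, true_and, mem_union, mem_diag, mem_image,
          Prod.exists, Prod.swap_prod_mk] at hp ⊢
        rcases lt_trichotomy p.1 p.2 with h | h | h
        · exact Or.inl (Or.inr ⟨h, hp⟩)
        · exact Or.inl (Or.inl h)
        · exact Or.inr ⟨p.2, p.1, ⟨h, by rwa [dist_comm]⟩, rfl⟩
    _ ≤ #(univ.diag : Finset (ι × ι)) + #(closePairs x w) +
          #((closePairs x w).image Prod.swap) :=
        (card_union_le _ _).trans (by gcongr; exact card_union_le _ _)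
    _ ≤ Fintype.card ι + 2 * #(closePairs x w) := by
        rw [diag_card, card_univ]
        linarith [card_image_le (s := closePairs x w) (f := Prod.swap)]

theorem sq_card_le_of_cover {κ : Type*} [Fintype κ] [Nonempty κ] (x : ι → E) (T : Finset ι)
    (f : κ → Set E) {w : ℝ} (hw : 0 ≤ w) (hT : x '' T ⊆ ⋃ k, f k)
    (hf : ∀ k, Metric.ediam (f k) ≤ ENNReal.ofReal w) :
    #T ^ 2 ≤ Fintype.card κ * (Fintype.card ι + 2 * #(closePairs x w)) := by
  classical
  have hg : ∀ i, ∃ k, i ∈ T → x i ∈ f k := fun i => by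
    by_cases hi : i ∈ T
    · obtain ⟨k, hk⟩ := Set.mem_iUnion.1 (hT (Set.mem_image_of_mem x hi))
      exact ⟨k, fun _ => hk⟩
    · exact ⟨Classical.arbitrary κ, fun h => absurd h hi⟩
  choose g hg using hg
  have hsub : {p ∈ T ×ˢ T | g p.1 = g p.2} ⊆
      ({p | dist (x p.1) (x p.2) ≤ w} : Finset (ι × ι)) := by
    intro p hp
    simp only [mem_filter, mem_product, mem_univ, true_and] at hp ⊢
    have h1 := hg _ hp.1.1
    have h2 := hg _ hp.1.2
    rw [hp.2] at h1
    have := (Metric.edist_le_ediam_of_mem h1 h2).trans (hf _)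
    rwa [edist_dist, ENNReal.ofReal_le_ofReal_iff hw] at this
  calc #T ^ 2 ≤ Fintype.card κ * #{p ∈ T ×ˢ T | g p.1 = g p.2} :=
        sq_card_le_card_mul_card_filter_eq g T
    _ ≤ _ := Nat.mul_le_mul_left _ ((card_le_card hsub).trans (card_filter_dist_le_le x w))

end ClosePairs

theorem exists_two_pow_mem_Icc {y : ℝ} (hy : 0 ≤ y) :
    ∃ s : ℕ, y ≤ 2 ^ s ∧ (2 : ℝ) ^ s ≤ 1 + 2 * y := by
  rcases le_or_gt y 1 with h | h
  · exact ⟨0, by simpa using h, by simp [hy]⟩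
  · obtain ⟨n, hn, hn'⟩ := exists_nat_pow_near h.le one_lt_two
    exact ⟨n + 1, hn'.le, by rw [pow_succ]; linarith⟩

theorem two_pow_log_floor_le {y : ℝ} (hy : 1 ≤ y) : (2 : ℝ) ^ Nat.log 2 ⌊y⌋₊ ≤ y := by
  have h := Nat.pow_log_le_self 2 (Nat.floor_pos.2 hy).ne'
  calc (2 : ℝ) ^ Nat.log 2 ⌊y⌋₊ ≤ ⌊y⌋₊ := by exact_mod_cast h
    _ ≤ y := Nat.floor_le (by linarith)

theorem lt_two_pow_log_floor_succ (y : ℝ) : y < 2 ^ (Nat.log 2 ⌊y⌋₊ + 1) := by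
  have h := Nat.lt_pow_succ_log_self one_lt_two ⌊y⌋₊
  calc y < ⌊y⌋₊ + 1 := Nat.lt_floor_add_one y
    _ ≤ 2 ^ (Nat.log 2 ⌊y⌋₊ + 1) := by exact_mod_cast h

theorem mul_two_pow_le_pow_of_sq_le {m B C M : ℝ} (j : ℕ) (hm : 0 ≤ m) (hB : 4 ≤ B)
    (hC : 0 ≤ C) (hM : 0 ≤ M) (hMCB : M ^ 2 = C * B) (h : m ^ 2 ≤ C ^ 2 ^ j * B) :
    m * 2 ^ j ≤ M ^ 2 ^ j := by
  have hj : j ≤ 2 ^ j - 1 := by have := Nat.lt_two_pow_self (n := j); omega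
  have h4 : (4 : ℝ) ^ j ≤ B ^ (2 ^ j - 1) :=
    (pow_le_pow_left₀ (by norm_num) hB j).trans (pow_le_pow_right₀ (by linarith) hj)
  refine (pow_le_pow_iff_left₀ (by positivity) (by positivity) two_ne_zero).1 ?_
  calc (m * 2 ^ j) ^ 2 = m ^ 2 * 4 ^ j := by
        rw [mul_pow, ← pow_mul, mul_comm j, pow_mul]; norm_num
    _ ≤ C ^ 2 ^ j * B * B ^ (2 ^ j - 1) := by gcongr
    _ = (M ^ 2 ^ j) ^ 2 := by
        rw [mul_assoc, ← pow_succ', Nat.sub_add_cancel Nat.one_le_two_pow, ← mul_pow, ← hMCB,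
          ← pow_mul, ← pow_mul, mul_comm]

theorem sum_le_two_of_card_fiber_mul_two_pow_le {ι : Type*} (s : Finset ι) (idx : ι → ℕ)
    {f : ι → ℝ} {b : ℕ → ℝ} (hb : ∀ j, 0 < b j)
    (hf : ∀ i ∈ s, f i ≤ (b (idx i))⁻¹)
    (hcard : ∀ j, (#{i ∈ s | idx i = j} : ℝ) * 2 ^ j ≤ b j) :
    ∑ i ∈ s, f i ≤ 2 := by
  calc ∑ i ∈ s, f i = ∑ j ∈ s.image idx, ∑ i ∈ s with idx i = j, f i :=
        (sum_fiberwise_of_maps_to (fun i hi => mem_image_of_mem idx hi) _).symm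
    _ ≤ ∑ j ∈ s.image idx, ∑ i ∈ s with idx i = j, (b j)⁻¹ := by
        gcongr with j _ i hi
        rw [← (mem_filter.1 hi).2]
        exact hf i (mem_filter.1 hi).1
    _ ≤ ∑ j ∈ s.image idx, (1 / 2 : ℝ) ^ j := by
        gcongr with j
        rw [sum_const, nsmul_eq_mul, one_div_pow, ← div_eq_mul_inv, div_le_iff₀ (hb j),
          div_mul_eq_mul_div, le_div_iff₀ (by positivity), one_mul]
        exact hcard j
    _ ≤ ∑' j, (1 / 2 : ℝ) ^ j := summable_geometric_two.sum_le_tsum _ fun _ _ => by positivity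
    _ = 2 := tsum_geometric_two

section Annuli

variable {ι E : Type*} [Fintype ι] [LinearOrder ι] [PseudoMetricSpace E]
  {S : Set E} {k : ℕ} {x : ι → E}

theorem sq_card_le_of_pairwise_dist_le (hdbl : HasDoublingCovers S (2 ^ k))
    (hx : Set.range x ⊆ S) (T : Finset ι) {δ w : ℝ} (hδ : 0 ≤ δ) (hw : 0 < w)
    (hT : ∀ i ∈ T, ∀ j ∈ T, dist (x i) (x j) ≤ δ) :
    (#T : ℝ) ^ 2 ≤ (1 + 2 * (δ / w)) ^ k * (Fintype.card ι + 2 * #(closePairs x w)) := by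
  obtain ⟨s, hδs, hs⟩ := exists_two_pow_mem_Icc (div_nonneg hδ hw.le)
  obtain ⟨f, hfT, hf⟩ := hdbl.iterate s ((Set.image_subset_range x T).trans hx)
  have hdiam : Metric.ediam (x '' T) ≤ ENNReal.ofReal δ := by
    refine Metric.ediam_le ?_
    rintro _ ⟨i, hi, rfl⟩ _ ⟨j, hj, rfl⟩
    rw [edist_dist]
    exact ENNReal.ofReal_le_ofReal (hT i hi j hj)
  have hfw : ∀ v, Metric.ediam (f v) ≤ ENNReal.ofReal w := fun v => by
    refine (hf v).trans ?_
    rw [ENNReal.div_le_iff (by simp) (by simp)]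
    calc Metric.ediam (x '' T) ≤ ENNReal.ofReal (w * 2 ^ s) :=
          hdiam.trans (ENNReal.ofReal_le_ofReal (by rwa [div_le_iff₀ hw, mul_comm] at hδs))
      _ = ENNReal.ofReal w * 2 ^ s := by
          rw [ENNReal.ofReal_mul hw.le, ENNReal.ofReal_pow zero_le_two]; norm_num
  have hcount := sq_card_le_of_cover x T f hw.le hfT hfw
  rw [Fintype.card_fun, Fintype.card_fin, Fintype.card_fin, ← pow_mul, mul_comm k,
    pow_mul] at hcount
  calc (#T : ℝ) ^ 2 ≤ (2 ^ s) ^ k * (Fintype.card ι + 2 * #(closePairs x w)) := by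
        exact_mod_cast hcount
    _ ≤ _ := by gcongr

theorem sq_card_le_of_dist_lt (hdbl : HasDoublingCovers S (2 ^ k)) (hx : Set.range x ⊆ S)
    (x₀ : E) (T : Finset ι) {α β r : ℝ} (hα : 0 < α) (hβ : 0 < β) (hr : 0 < r) (j : ℕ)
    (hT : ∀ i ∈ T, dist (x i) x₀ < 2 ^ (j + 1) * (α * r)) :
    (#T : ℝ) ^ 2 ≤
      ((1 + 8 * α / β) ^ k) ^ 2 ^ j * (Fintype.card ι + 2 * #(closePairs x (β * r))) := by
  set ρ := 2 ^ (j + 1) * (α * r)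
  have hδ : ∀ i ∈ T, ∀ i' ∈ T, dist (x i) (x i') ≤ 2 * ρ :=
    fun i hi i' hi' => by linarith [dist_triangle_right (x i) (x i') x₀, hT i hi, hT i' hi']
  have hbernoulli : 1 + 2 * (2 * ρ / (β * r)) ≤ (1 + 8 * α / β) ^ 2 ^ j :=
    calc 1 + 2 * (2 * ρ / (β * r)) = 1 + ((2 ^ j : ℕ) : ℝ) * (8 * α / β) := by
          push_cast
          field_simp
          ring
      _ ≤ (1 + 8 * α / β) ^ 2 ^ j := one_add_mul_le_pow
          (by linarith [(by positivity : (0 : ℝ) ≤ 8 * α / β)]) _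
  refine (sq_card_le_of_pairwise_dist_le hdbl hx T (w := β * r) (by positivity) (by positivity)
    hδ).trans ?_
  rw [← pow_mul, mul_comm k, pow_mul]
  gcongr

theorem sum_rpow_neg_dist_le_two [Nonempty ι] (hdbl : HasDoublingCovers S (2 ^ k))
    (hx : Set.range x ⊆ S) (x₀ : E) {α β r M : ℝ} (hα : 0 < α) (hβ : 0 < β) (hr : 0 < r)
    (hM0 : 0 ≤ M)
    (hM : M ^ 2 = (1 + 8 * α / β) ^ k * (2 * #(closePairs x (β * r)) + 2 * Fintype.card ι)) :
    ∑ i with α * r ≤ dist (x i) x₀, M ^ (-(dist (x i) x₀ / (α * r))) ≤ 2 := by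
  set C := (1 + 8 * α / β) ^ k
  set B : ℝ := 2 * #(closePairs x (β * r)) + 2 * Fintype.card ι
  set t : ι → ℝ := fun i => dist (x i) x₀ / (α * r)
  set Far : Finset ι := {i | α * r ≤ dist (x i) x₀}
  set idx : ι → ℕ := fun i => Nat.log 2 ⌊t i⌋₊
  have hC : 1 ≤ C := one_le_pow₀ (by linarith [(by positivity : (0 : ℝ) ≤ 8 * α / β)])
  have hn : (1 : ℝ) ≤ Fintype.card ι := by exact_mod_cast Fintype.card_pos
  have hB : 2 * (Fintype.card ι : ℝ) ≤ B := by simp [B]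
  have hM1 : 1 ≤ M := by nlinarith
  have hFar : ∀ i ∈ Far, 1 ≤ t i := fun i hi => by
    rw [one_le_div (by positivity)]
    exact (mem_filter.1 hi).2
  have hterm : ∀ i ∈ Far, M ^ (-t i) ≤ (M ^ 2 ^ idx i)⁻¹ := fun i hi => by
    rw [← Real.rpow_natCast, ← Real.rpow_neg (by positivity)]
    refine Real.rpow_le_rpow_of_exponent_le hM1 (neg_le_neg ?_)
    exact_mod_cast two_pow_log_floor_le (hFar i hi)
  -- with at most two points every term is `≤ 1`; otherwise `B ≥ 4`, which the annulus count needs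
  rcases le_or_gt (Fintype.card ι) 2 with hsmall | hlarge
  · have hle1 : ∀ i ∈ Far, M ^ (-t i) ≤ 1 := fun i _ =>
      Real.rpow_le_one_of_one_le_of_nonpos hM1 (neg_nonpos.2 (by positivity))
    calc ∑ i ∈ Far, M ^ (-t i) ≤ #Far • 1 := sum_le_card_nsmul _ _ _ hle1
      _ ≤ 2 := by
        rw [nsmul_one]
        exact_mod_cast (card_le_univ Far).trans hsmall
  have hB4 : 4 ≤ B := by
    have : (3 : ℝ) ≤ Fintype.card ι := by exact_mod_cast hlarge
    linarith
  have hcount : ∀ j, (#{i ∈ Far | idx i = j} : ℝ) * 2 ^ j ≤ M ^ 2 ^ j := fun j => by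
    refine mul_two_pow_le_pow_of_sq_le j (by positivity) hB4 (by positivity) hM0 hM ?_
    refine (sq_card_le_of_dist_lt hdbl hx x₀ _ hα hβ hr j fun i hi => ?_).trans ?_
    · rw [← div_lt_iff₀ (by positivity), ← (mem_filter.1 hi).2]
      exact lt_two_pow_log_floor_succ (t i)
    · gcongr
      linarith
  exact sum_le_two_of_card_fiber_mul_two_pow_le Far idx (fun j => by positivity) hterm hcount

end Annuli

theorem rpow_log_div_log_one_div_mul {c M : ℝ} (hc0 : 0 < c) (hc1 : c ≠ 1) (hM : 0 < M)
    (u : ℝ) :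
    c ^ (Real.log M / Real.log (1 / c) * u) = M ^ (-u) := by
  have hlog : Real.log c ≠ 0 := Real.log_ne_zero_of_pos_of_ne_one hc0 hc1
  rw [Real.rpow_def_of_pos hc0, Real.rpow_def_of_pos hM, one_div, Real.log_inv]
  congr 1
  field_simp

theorem lp_doubling_lsh_query_bound_general {d n : ℕ} (hn : 0 < n)
    (q : ℝ≥0∞) [Fact (1 ≤ q)]
    (x₀ : PiLp q fun _ : Fin d => ℝ) (x : Fin n → PiLp q fun _ : Fin d => ℝ)
    (r β α c : ℝ) (hr : 0 < r) (hβ : 0 < β) (hα : 1 ≤ α) (hc0 : 0 < c) (hc1 : c < 1)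
    (d₀ : ℕ)
    (hdbl : ∀ Y : Set (PiLp q fun _ : Fin d => ℝ), Y ⊆ insert x₀ (Set.range x) →
      ∃ f : Fin (2 ^ (d₀ + 1)) → Set (PiLp q fun _ : Fin d => ℝ),
        Y ⊆ ⋃ i, f i ∧ ∀ i, EMetric.diam (f i) ≤ EMetric.diam Y / 2)
    (Nβ : ℕ)
    (hNβ : Nβ = (Finset.univ.filter fun ij : Fin n × Fin n =>
        ij.1 < ij.2 ∧ dist (x ij.1) (x ij.2) ≤ β * r).card)
    (M K : ℝ)
    (hM : M = (1 + 8 * α / β) ^ (((d₀ : ℝ) + 1) / 2) *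
        Real.sqrt (2 * (Nβ : ℝ) + 2 * (n : ℝ)))
    (hK : K = (1 / α) * Real.log M / Real.log (1 / c)) :
    c ^ (-K) * (1 + ∑ i ∈ Finset.univ.filter fun i : Fin n => α * r ≤ dist (x i) x₀,
        c ^ (K * dist (x i) x₀ / r)) ≤
      3 * (1 + 8 * α / β) ^ (((d₀ : ℝ) + 1) / (2 * α)) *
        (2 * (Nβ : ℝ) + 2 * (n : ℝ)) ^ ((1 : ℝ) / (2 * α)) := by
  have : Nonempty (Fin n) := ⟨⟨0, hn⟩⟩
  have hα0 : 0 < α := by linarith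
  have hA : 0 < 1 + 8 * α / β := by positivity
  have hB : 0 < 2 * (Nβ : ℝ) + 2 * n := by positivity
  have hM0 : 0 < M := hM ▸ mul_pos (Real.rpow_pos_of_pos hA _) (Real.sqrt_pos.2 hB)
  have hN : (Nβ : ℝ) = #(closePairs x (β * r)) := by rw [hNβ]; rfl
  have hMsq : M ^ 2 = (1 + 8 * α / β) ^ (d₀ + 1) *
      (2 * #(closePairs x (β * r)) + 2 * Fintype.card (Fin n)) := by
    rw [hM, mul_pow, Real.sq_sqrt hB.le, ← Real.rpow_natCast, ← Real.rpow_mul hA.le,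
      Fintype.card_fin, hN, ← Real.rpow_natCast _ (d₀ + 1)]
    push_cast
    ring_nf
  have hMα : M ^ (1 / α) = (1 + 8 * α / β) ^ (((d₀ : ℝ) + 1) / (2 * α)) *
      (2 * (Nβ : ℝ) + 2 * (n : ℝ)) ^ ((1 : ℝ) / (2 * α)) := by
    rw [hM, Real.sqrt_eq_rpow, Real.mul_rpow (by positivity) (by positivity),
      ← Real.rpow_mul hA.le, ← Real.rpow_mul hB.le]
    ring_nf
  have hcK : c ^ (-K) = M ^ (1 / α) := by
    rw [hK, show -(1 / α * Real.log M / Real.log (1 / c)) =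
        Real.log M / Real.log (1 / c) * -(1 / α) by ring,
      rpow_log_div_log_one_div_mul hc0 hc1.ne hM0, neg_neg]
  have hterm : ∀ i, c ^ (K * dist (x i) x₀ / r) = M ^ (-(dist (x i) x₀ / (α * r))) :=
      fun i => by
    rw [← rpow_log_div_log_one_div_mul hc0 hc1.ne hM0, hK]
    congr 1
    field_simp
  have hsum := sum_rpow_neg_dist_le_two hdbl (Set.subset_insert _ _) x₀ hα0 hβ hr hM0.le hMsq
  rw [hcK, Finset.sum_congr rfl fun i _ => hterm i, mul_assoc 3, ← hMα, mul_comm 3]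
  gcongr
  linarith

/-- Proposition 8 (analytic core, `p`-stable LSH in `ℓ_q`, `q ∈ [1,2]`, `ρ(s) = 1/s`):
if `{x₀, x₁, …, xₙ} ⊆ (ℝ^d, ‖·‖_q)` has doubling dimension at most `d₀ + 1`,
`M = (1 + 8α/β)^{(d₀+1)/2} √(2N_β + 2n)` and `K = (1/α)·log M / log(1/c)`, then
`c^{-K} (1 + Σ_{i : ‖x_i − x₀‖_q ≥ αr} c^{K‖x_i − x₀‖_q/r})
  ≤ 3 (1 + 8α/β)^{(d₀+1)/(2α)} (2N_β + 2n)^{1/(2α)}`. -/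
theorem lp_doubling_lsh_query_bound {d n : ℕ} (hn : 0 < n)
    (q : ℝ≥0∞) [Fact (1 ≤ q)] (hq2 : q ≤ 2)
    (x₀ : PiLp q fun _ : Fin d => ℝ) (x : Fin n → PiLp q fun _ : Fin d => ℝ)
    (r β α c : ℝ) (hr : 0 < r) (hβ : 0 < β) (hα : 1 ≤ α) (hc0 : 0 < c) (hc1 : c < 1)
    (d₀ : ℕ)
    (hdbl : ∀ Y : Set (PiLp q fun _ : Fin d => ℝ), Y ⊆ insert x₀ (Set.range x) →
      ∃ f : Fin (2 ^ (d₀ + 1)) → Set (PiLp q fun _ : Fin d => ℝ),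
        Y ⊆ ⋃ i, f i ∧ ∀ i, EMetric.diam (f i) ≤ EMetric.diam Y / 2)
    (Nβ : ℕ)
    (hNβ : Nβ = (Finset.univ.filter fun ij : Fin n × Fin n =>
        ij.1 < ij.2 ∧ dist (x ij.1) (x ij.2) ≤ β * r).card)
    (M K : ℝ)
    (hM : M = (1 + 8 * α / β) ^ (((d₀ : ℝ) + 1) / 2) *
        Real.sqrt (2 * (Nβ : ℝ) + 2 * (n : ℝ)))
    (hK : K = (1 / α) * Real.log M / Real.log (1 / c)) :
    c ^ (-K) * (1 + ∑ i ∈ Finset.univ.filter fun i : Fin n => α * r ≤ dist (x i) x₀,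
        c ^ (K * dist (x i) x₀ / r)) ≤
      3 * (1 + 8 * α / β) ^ (((d₀ : ℝ) + 1) / (2 * α)) *
        (2 * (Nβ : ℝ) + 2 * (n : ℝ)) ^ ((1 : ℝ) / (2 * α)) :=
  lp_doubling_lsh_query_bound_general hn q x₀ x r β α c hr hβ hα hc0 hc1 d₀ hdbl Nβ hNβ M K hM hK
end
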